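/- arXiv:0910.1412 — 9 statements merged into one kernel-verified Lean document; each statement's English description precedes it below -/
import Mathlib

section
/- Let f be a network and M ∈ X^□ \ X a symbolic steady state of f (i.e., F(M) = M). Then the set of regular states represented by M is a trap set of the asynchronous state transition graph S(f): every edge of S(f) starting at a state in M ends at a state in M. -/
/-! Discrete regulatory networks (Siebert), shared definitions. -/

open Finset

namespace DRN

/-- A (regular) state of a network with `n` components, component `i`
ranging over `{0, …, pᵢ}` (encoded as `Fin (pᵢ + 1)`). -/
abbrev NState {n : ℕ} (p : Fin n → ℕ) := ∀ i, Fin (p i + 1)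

/-- An element of `X^□`: a tuple of finite sets of component values
(intended: discrete intervals), identified with the subset `M₁ × ⋯ × Mₙ` of `X`. -/
abbrev SymState {n : ℕ} (p : Fin n → ℕ) := ∀ i, Finset (Fin (p i + 1))

/-- `x` belongs to the subset of state space represented by `M`. -/
def memBox {n : ℕ} {p : Fin n → ℕ} (x : NState p) (M : SymState p) : Prop :=
  ∀ i, x i ∈ M i

/-- `M ∈ X^□`: every component of `M` is a (nonempty) discrete interval. -/
def IsBox {n : ℕ} {p : Fin n → ℕ} (M : SymState p) : Prop :=
  ∀ i, ∃ a b : Fin (p i + 1), a ≤ b ∧ M i = Finset.Icc a b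

/-- `M` is (identified with) a regular state: all components are singletons. -/
def IsRegular {n : ℕ} {p : Fin n → ℕ} (M : SymState p) : Prop :=
  ∀ i, (M i).card = 1

/-- The function `F : X^□ → X^□`, `F_i(M) = [min_{x∈M} f_i(x), max_{x∈M} f_i(x)]`. -/
noncomputable def Fop {n : ℕ} {p : Fin n → ℕ} (f : NState p → NState p)
    (M : SymState p) : SymState p :=
  fun i => Finset.Icc ((Fintype.piFinset M).inf fun x => f x i)
                      ((Fintype.piFinset M).sup fun x => f x i)

/-- A symbolic steady state: an element of `X^□ \ X` with `F(M) = M`. -/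
def IsSymSteady {n : ℕ} {p : Fin n → ℕ} (f : NState p → NState p)
    (M : SymState p) : Prop :=
  IsBox M ∧ ¬ IsRegular M ∧ Fop f M = M

/-- Edge of the asynchronous state transition graph `S(f)`. -/
def AsyncEdge {n : ℕ} {p : Fin n → ℕ} (f : NState p → NState p)
    (x x' : NState p) : Prop :=
  (x' = x ∧ f x = x) ∨
  ∃ i, f x i ≠ x i ∧ (∀ j, j ≠ i → x' j = x j) ∧
    ((x i < f x i ∧ (x' i : ℕ) = (x i : ℕ) + 1) ∨
     (f x i < x i ∧ (x' i : ℕ) + 1 = (x i : ℕ)))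

/-- A trap set of `S(f)`: a nonempty set that no trajectory ever leaves. -/
def IsTrapSet {n : ℕ} {p : Fin n → ℕ} (f : NState p → NState p)
    (D : Set (NState p)) : Prop :=
  D.Nonempty ∧ ∀ x ∈ D, ∀ x', AsyncEdge f x x' → x' ∈ D

/-- An attractor of `S(f)`: a trap set any two of whose states are joined by a path. -/
def IsAttractor {n : ℕ} {p : Fin n → ℕ} (f : NState p → NState p)
    (A : Set (NState p)) : Prop :=
  IsTrapSet f A ∧ ∀ x ∈ A, ∀ y ∈ A, Relation.ReflTransGen (AsyncEdge f) x y

/-- The sequence `M̃⁰ = M`, `M̃ᵏ_j = [min(M̃ᵏ⁻¹_j ∪ F_j(M̃ᵏ⁻¹)), max(M̃ᵏ⁻¹_j ∪ F_j(M̃ᵏ⁻¹))]`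
whose limit is the extended forward orbit of `M`. -/
noncomputable def efoSeq {n : ℕ} {p : Fin n → ℕ} (f : NState p → NState p)
    (M : SymState p) : ℕ → SymState p
  | 0 => M
  | k + 1 => fun j =>
      Finset.Icc ((efoSeq f M k j ∪ Fop f (efoSeq f M k) j).inf id)
                 ((efoSeq f M k j ∪ Fop f (efoSeq f M k) j).sup id)

/-- Signed edge `(i, j, ε)` of the global interaction graph `G(f)(Y)`
(for `Y = Set.univ` this is the global interaction graph `G(f)`). -/
def GEdge {n : ℕ} {p : Fin n → ℕ} (f : NState p → NState p) (Y : Set (NState p))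
    (i j : Fin n) (ε : ℤ) : Prop :=
  ∃ x ∈ Y, ∃ x' : NState p, ∃ c : ℤ, (c = 1 ∨ c = -1) ∧
    (∀ l, l ≠ i → x' l = x l) ∧ (((x' i : ℕ) : ℤ) = ((x i : ℕ) : ℤ) + c) ∧
    Int.sign (((f x' j : ℕ) : ℤ) - ((f x j : ℕ) : ℤ)) * c = ε

/-- Signed edge `(i, j, ε)` of `G(f|_M)`: both states involved must lie in `M`. -/
def GEdgeRestr {n : ℕ} {p : Fin n → ℕ} (f : NState p → NState p) (M : SymState p)
    (i j : Fin n) (ε : ℤ) : Prop :=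
  ∃ x x' : NState p, memBox x M ∧ memBox x' M ∧ ∃ c : ℤ, (c = 1 ∨ c = -1) ∧
    (∀ l, l ≠ i → x' l = x l) ∧ (((x' i : ℕ) : ℤ) = ((x i : ℕ) : ℤ) + c) ∧
    Int.sign (((f x' j : ℕ) : ℤ) - ((f x j : ℕ) : ℤ)) * c = ε

/-- `J(M)`: the set of symbolic-valued (non-singleton) components of `M`. -/
def JSet {n : ℕ} {p : Fin n → ℕ} (M : SymState p) : Set (Fin n) :=
  {i | 1 < (M i).card}

/-- Signed edge of `G^θ(M)`: an edge of `G(f|_M)` with both end-vertices in `J(M)`. -/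
def ThetaEdge {n : ℕ} {p : Fin n → ℕ} (f : NState p → NState p) (M : SymState p)
    (i j : Fin n) (ε : ℤ) : Prop :=
  i ∈ JSet M ∧ j ∈ JSet M ∧ GEdgeRestr f M i j ε

/-- Adjacency (some signed edge) in `G^θ(M)`. -/
def ThetaAdj {n : ℕ} {p : Fin n → ℕ} (f : NState p → NState p) (M : SymState p)
    (i j : Fin n) : Prop :=
  ∃ ε : ℤ, (ε = 1 ∨ ε = -1) ∧ ThetaEdge f M i j ε

/-- Weak connectivity in `G^θ(M)`. -/
def ThetaConn {n : ℕ} {p : Fin n → ℕ} (f : NState p → NState p) (M : SymState p) :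
    Fin n → Fin n → Prop :=
  Relation.ReflTransGen fun a b => ThetaAdj f M a b ∨ ThetaAdj f M b a

/-- `V` is the vertex set of a component (maximal weakly connected subgraph) of `G^θ(M)`;
since components are induced subgraphs, they are determined by their vertex sets. -/
def IsComponent {n : ℕ} {p : Fin n → ℕ} (f : NState p → NState p) (M : SymState p)
    (V : Set (Fin n)) : Prop :=
  ∃ i ∈ JSet M, V = {j | j ∈ JSet M ∧ ThetaConn f M i j}

/-- States of a network module with component set `V ⊆ {1,…,n}`
(vertices of `G(g)` renamed via the order-preserving bijection `ι`). -/
abbrev MState {n : ℕ} (p : Fin n → ℕ) (V : Set (Fin n)) := ∀ i : V, Fin (p i.1 + 1)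

/-- The projection `π^V` onto the components in `V`. -/
def projV {n : ℕ} {p : Fin n → ℕ} (V : Set (Fin n)) (x : NState p) : MState p V :=
  fun i => x i.1

open Classical in
/-- `ρ^V : X^V → X^□`, filling components outside `V` with `M_i`. -/
noncomputable def rhoV {n : ℕ} {p : Fin n → ℕ} (M : SymState p) (V : Set (Fin n))
    (z : MState p V) : SymState p :=
  fun i => if h : i ∈ V then {z ⟨i, h⟩} else M i

/-- The network module `f^V = π^V ∘ F ∘ ρ^V` derived from a component with vertex set `V`
(`Finset.inf _ id` extracts the unique element of the singleton `F_i(ρ^V(z))`). -/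
noncomputable def modFun {n : ℕ} {p : Fin n → ℕ} (f : NState p → NState p)
    (M : SymState p) (V : Set (Fin n)) (z : MState p V) : MState p V :=
  fun i => (Fop f (rhoV M V z) i.1).inf id

/-- `z` lies in the module state space `X^V = ∏_{i ∈ V} M_i`. -/
def memBoxV {n : ℕ} {p : Fin n → ℕ} (M : SymState p) (V : Set (Fin n))
    (z : MState p V) : Prop :=
  ∀ i : V, z i ∈ M i.1

/-- Edge of the asynchronous state transition graph `S(g)` of a module `g` with
state space `X^V = ∏_{i ∈ V} M_i`. -/
def ModAsyncEdge {n : ℕ} {p : Fin n → ℕ} (M : SymState p) (V : Set (Fin n))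
    (g : MState p V → MState p V) (z z' : MState p V) : Prop :=
  memBoxV M V z ∧ memBoxV M V z' ∧
  ((z' = z ∧ g z = z) ∨
   ∃ i : V, g z i ≠ z i ∧ (∀ l, l ≠ i → z' l = z l) ∧
     ((z i < g z i ∧ (z' i : ℕ) = (z i : ℕ) + 1) ∨
      (g z i < z i ∧ (z' i : ℕ) + 1 = (z i : ℕ))))

/-- Attractor of the state transition graph of a module with state space `X^V`. -/
def IsModAttractor {n : ℕ} {p : Fin n → ℕ} (M : SymState p) (V : Set (Fin n))
    (g : MState p V → MState p V) (A : Set (MState p V)) : Prop :=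
  A.Nonempty ∧ (∀ z ∈ A, memBoxV M V z) ∧
  (∀ z ∈ A, ∀ z', ModAsyncEdge M V g z z' → z' ∈ A) ∧
  ∀ z ∈ A, ∀ z' ∈ A, Relation.ReflTransGen (ModAsyncEdge M V g) z z'

/-- Edge of the product state transition graph `S^M` (Def. 4.1),
given the components `V 1, …, V m` of `G^θ(M)`. -/
noncomputable def SMEdge {n : ℕ} {p : Fin n → ℕ} (f : NState p → NState p)
    (M : SymState p) {m : ℕ} (V : Fin m → Set (Fin n)) (x1 x2 : NState p) : Prop :=
  memBox x1 M ∧ memBox x2 M ∧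
  ((x1 = x2 ∧ ∀ j, ModAsyncEdge M (V j) (modFun f M (V j))
      (projV (V j) x1) (projV (V j) x2)) ∨
   ∃ j, ModAsyncEdge M (V j) (modFun f M (V j)) (projV (V j) x1) (projV (V j) x2) ∧
     ∀ i, i ∉ V j → x1 i = x2 i)

/-- If `M` is a symbolic steady state of `f`, then the set of regular
states represented by `M` is a trap set of `S(f)`. -/
theorem stmt0 {n : ℕ} {p : Fin n → ℕ} (f : NState p → NState p) (M : SymState p)
    (hM : IsSymSteady f M) :
    IsTrapSet f {x | memBox x M} := by
  obtain ⟨hbox, -, hF⟩ := hM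
  constructor
  · refine ⟨fun i => (hbox i).choose, fun i => ?_⟩
    obtain ⟨b, hab, hM⟩ := (hbox i).choose_spec
    rw [hM]
    exact Finset.mem_Icc.mpr ⟨le_refl _, hab⟩
  · rintro x hx x' (⟨rfl, -⟩ | ⟨i, hne, hoth, hcase⟩)
    · exact hx
    · intro j
      by_cases hj : j = i
      · subst hj
        have hxmem : x ∈ Fintype.piFinset M := Fintype.mem_piFinset.mpr hx
        have hfx : f x j ∈ M j := by
          have h1 : (Fintype.piFinset M).inf (fun y => f y j) ≤ f x j :=
            Finset.inf_le hxmem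
          have h2 : f x j ≤ (Fintype.piFinset M).sup (fun y => f y j) :=
            Finset.le_sup (f := fun y => f y j) hxmem
          have : f x j ∈ Fop f M j := Finset.mem_Icc.mpr ⟨h1, h2⟩
          rwa [hF] at this
        obtain ⟨a, b, hab, hMj⟩ := hbox j
        rw [hMj] at hfx ⊢
        have hxj : x j ∈ Finset.Icc a b := by rw [← hMj]; exact hx j
        rw [Finset.mem_Icc] at hfx hxj ⊢
        rcases hcase with ⟨hlt, heq⟩ | ⟨hlt, heq⟩ <;>
        · rw [Fin.lt_def] at hlt
          rw [Fin.le_def] at *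
          omega
      · rw [hoth j hj]; exact hx j

end DRN
end

section
/- Let f be a network, let (I,M') be the frozen core of a state M' ∈ X^□, let M^0 be the extended forward orbit of M', and let M^k = F(M^{k−1}) for k ≥ 1. Then the sequence (M^k) is monotonically decreasing with respect to inclusion: M^{k+1} ⊆ M^k for all k ≥ 0. -/
/-! Discrete regulatory networks (Siebert), shared definitions. -/

open Finset

namespace DRN

lemma Fop_mono {n : ℕ} {p : Fin n → ℕ} (f : NState p → NState p)
    {M N : SymState p} (h : ∀ i, M i ⊆ N i) :
    ∀ i, Fop f M i ⊆ Fop f N i := by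
  intro i
  have hsub : Fintype.piFinset M ⊆ Fintype.piFinset N :=
    Fintype.piFinset_subset _ _ h
  exact Finset.Icc_subset_Icc (Finset.inf_mono hsub) (Finset.sup_mono hsub)

set_option maxHeartbeats 1000000 in
/-- with `M⁰` the extended forward orbit of `M'` (limit of `efoSeq`) and
`Mᵏ = F(Mᵏ⁻¹)`, the sequence `(Mᵏ)` is monotonically decreasing for inclusion. -/
theorem stmt1 {n : ℕ} {p : Fin n → ℕ} (f : NState p → NState p) (M' : SymState p)
    (hM' : IsBox M') (Mt : SymState p)
    (hMt : ∃ N, ∀ k ≥ N, efoSeq f M' k = Mt)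
    (I : Set (Fin n)) (hI : I = {i | (M' i).card = 1 ∧ Mt i = M' i})
    (Mseq : ℕ → SymState p) (hM0 : Mseq 0 = Mt)
    (hMk : ∀ k, Mseq (k + 1) = Fop f (Mseq k)) :
    ∀ k, ∀ i, Mseq (k + 1) i ⊆ Mseq k i := by
  obtain ⟨N, hN⟩ := hMt
  have hfix : Fop f Mt = Fop f (efoSeq f M' N) := by rw [hN N le_rfl]
  have hbase : ∀ i, Fop f Mt i ⊆ Mt i := by
    intro i x hx
    have h1 : efoSeq f M' (N + 1) = Mt := hN (N + 1) (Nat.le_succ N)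
    have h2 : efoSeq f M' N = Mt := hN N le_rfl
    have : x ∈ efoSeq f M' N i ∪ Fop f (efoSeq f M' N) i := by
      rw [h2]; exact Finset.mem_union_right _ hx
    have hmem : x ∈ efoSeq f M' (N + 1) i := by
      show x ∈ Finset.Icc _ _
      rw [Finset.mem_Icc]
      exact ⟨Finset.inf_le this, Finset.le_sup (f := id) this⟩
    rwa [h1] at hmem
  intro k
  induction k with
  | zero => intro i; rw [hMk 0, hM0]; exact hbase i
  | succ k ih =>
      intro i
      have h := Fop_mono f ih i
      rw [← hMk k] at h
      rw [hMk (k + 1)]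
      exact h

end DRN
end

section
/- Let f be a network, let (I,M') be the frozen core of a state M' ∈ X^□, let M^0 be the extended forward orbit of M', and let M^k = F(M^{k−1}) for k ≥ 1. Then the sequence (M^k) is eventually constant, and its limit M satisfies F(M) = M; i.e., M is a regular steady state (a fixed point of f) or a symbolic steady state of f. -/
/-! Discrete regulatory networks (Siebert), shared definitions. -/

open Finset

namespace DRN

lemma fop_nonempty {n : ℕ} {p : Fin n → ℕ} (f : NState p → NState p)
    (M : SymState p) (h : ∀ i, (M i).Nonempty) (i : Fin n) :
    (Fop f M i).Nonempty := by
  obtain ⟨x, hx⟩ := Fintype.piFinset_nonempty.2 h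
  exact Finset.nonempty_Icc.2
    (le_trans (Finset.inf_le hx) (Finset.le_sup (f := fun x => f x i) hx))

lemma fop_mono {n : ℕ} {p : Fin n → ℕ} (f : NState p → NState p)
    (M N : SymState p) (h : ∀ i, M i ⊆ N i) (i : Fin n) :
    Fop f M i ⊆ Fop f N i := by
  have hsub := Fintype.piFinset_subset M N h
  exact Finset.Icc_subset_Icc (Finset.inf_mono hsub) (Finset.sup_mono hsub)

lemma subset_Icc_inf_sup {m : ℕ} (S : Finset (Fin (m+1))) :
    S ⊆ Finset.Icc (S.inf id) (S.sup id) := fun _ hx =>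
  Finset.mem_Icc.2 ⟨Finset.inf_le hx, Finset.le_sup (f := id) hx⟩

/-- with `M⁰` the extended forward orbit of `M'` and `Mᵏ = F(Mᵏ⁻¹)`,
the sequence `(Mᵏ)` is eventually constant and its limit `M` satisfies `F(M) = M`,
i.e. `M` is a regular steady state (fixed point of `f`) or a symbolic steady state. -/
theorem stmt2 {n : ℕ} {p : Fin n → ℕ} (f : NState p → NState p) (M' : SymState p)
    (hM' : IsBox M') (Mt : SymState p)
    (hMt : ∃ N, ∀ k ≥ N, efoSeq f M' k = Mt)
    (I : Set (Fin n)) (hI : I = {i | (M' i).card = 1 ∧ Mt i = M' i})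
    (Mseq : ℕ → SymState p) (hM0 : Mseq 0 = Mt)
    (hMk : ∀ k, Mseq (k + 1) = Fop f (Mseq k)) :
    ∃ (N : ℕ) (Mlim : SymState p), (∀ l ≥ N, Mseq l = Mlim) ∧ Fop f Mlim = Mlim ∧
      ((∃ x : NState p, (∀ i, Mlim i = {x i}) ∧ f x = x) ∨ IsSymSteady f Mlim) := by
  classical
  obtain ⟨N', hN'⟩ := hMt
  -- nonemptiness along the efo sequence
  have hefo_ne : ∀ k i, (efoSeq f M' k i).Nonempty := by
    intro k
    induction k with
    | zero =>
      intro i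
      obtain ⟨a, b, hab, hM⟩ := hM' i
      simpa [efoSeq, hM] using Finset.nonempty_Icc.2 hab
    | succ k ih =>
      intro i
      obtain ⟨x, hx⟩ := ih i
      have hx2 : x ∈ efoSeq f M' k i ∪ Fop f (efoSeq f M' k) i :=
        Finset.mem_union_left _ hx
      exact ⟨x, by simpa [efoSeq] using subset_Icc_inf_sup _ hx2⟩
  have h1 : efoSeq f M' N' = Mt := hN' N' le_rfl
  have h2 : efoSeq f M' (N' + 1) = Mt := hN' (N' + 1) (Nat.le_succ _)
  have hMt_ne : ∀ i, (Mt i).Nonempty := fun i => h1 ▸ hefo_ne N' i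
  -- key: F(Mt) ⊆ Mt componentwise
  have hkey : ∀ i, Fop f Mt i ⊆ Mt i := by
    intro i x hx
    have hx2 : x ∈ efoSeq f M' N' i ∪ Fop f (efoSeq f M' N') i := by
      rw [h1]; exact Finset.mem_union_right _ hx
    have := subset_Icc_inf_sup _ hx2
    rw [← h2]
    simpa [efoSeq] using this
  -- nonemptiness along Mseq
  have hMne : ∀ k i, (Mseq k i).Nonempty := by
    intro k
    induction k with
    | zero => intro i; rw [hM0]; exact hMt_ne i
    | succ k ih => intro i; rw [hMk k]; exact fop_nonempty f _ ih i
  -- Mseq is componentwise decreasing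
  have hdec : ∀ k i, Mseq (k + 1) i ⊆ Mseq k i := by
    intro k
    induction k with
    | zero => intro i; rw [hMk 0, hM0]; exact hkey i
    | succ k ih =>
      intro i
      have h := fop_mono f (Mseq (k + 1)) (Mseq k) ih i
      rw [← hMk k] at h
      rw [hMk (k + 1)]
      exact h
  -- total cardinality is antitone, hence eventually constant
  set c : ℕ → ℕ := fun k => ∑ i, (Mseq k i).card with hc_def
  have hc : ∀ k, c (k + 1) ≤ c k := fun k =>
    Finset.sum_le_sum fun i _ => Finset.card_le_card (hdec k i)
  have hcanti : Antitone c := antitone_nat_of_succ_le hc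
  obtain ⟨N, hN⟩ := Nat.sInf_mem (⟨c 0, 0, rfl⟩ : (Set.range c).Nonempty)
  have hck : ∀ k, N ≤ k → c k = c N := by
    intro k hk
    refine le_antisymm (hcanti hk) ?_
    rw [hN]; exact Nat.sInf_le ⟨k, rfl⟩
  have hstep : ∀ k, N ≤ k → Mseq (k + 1) = Mseq k := by
    intro k hk
    funext i
    refine Finset.eq_of_subset_of_card_le (hdec k i) ?_
    by_contra hlt
    have hlt' : (Mseq (k + 1) i).card < (Mseq k i).card := lt_of_not_ge hlt
    have : c (k + 1) < c k :=
      Finset.sum_lt_sum (fun j _ => Finset.card_le_card (hdec k j))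
        ⟨i, Finset.mem_univ i, hlt'⟩
    rw [hck k hk, hck (k + 1) (le_trans hk (Nat.le_succ k))] at this
    exact lt_irrefl _ this
  have hconst : ∀ l, N + 1 ≤ l → Mseq l = Mseq (N + 1) := by
    intro l hl
    induction l, hl using Nat.le_induction with
    | base => rfl
    | succ l hl ih => rw [hstep l (le_trans (Nat.le_succ N) hl), ih]
  have hFop : Fop f (Mseq (N + 1)) = Mseq (N + 1) := by
    rw [← hMk (N + 1)]
    exact hstep (N + 1) (Nat.le_succ N)
  refine ⟨N + 1, Mseq (N + 1), hconst, hFop, ?_⟩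
  by_cases hreg : IsRegular (Mseq (N + 1))
  · left
    choose x hx using fun i => Finset.card_eq_one.mp (hreg i)
    refine ⟨x, hx, ?_⟩
    funext i
    have hxm : x ∈ Fintype.piFinset (Mseq (N + 1)) :=
      Fintype.mem_piFinset.2 fun j => by
        rw [hx j]; exact Finset.mem_singleton_self _
    have h1' : Fop f (Mseq (N + 1)) i = {x i} := by
      rw [hFop, hx i]
    have hls : ((Fintype.piFinset (Mseq (N + 1))).inf fun y => f y i) ≤
        (Fintype.piFinset (Mseq (N + 1))).sup fun y => f y i :=
      le_trans (Finset.inf_le hxm) (Finset.le_sup (f := fun y => f y i) hxm)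
    have ha : ((Fintype.piFinset (Mseq (N + 1))).inf fun y => f y i) = x i := by
      have hm : ((Fintype.piFinset (Mseq (N + 1))).inf fun y => f y i)
          ∈ Fop f (Mseq (N + 1)) i := Finset.mem_Icc.2 ⟨le_rfl, hls⟩
      rw [h1'] at hm
      exact Finset.mem_singleton.mp hm
    have hb : ((Fintype.piFinset (Mseq (N + 1))).sup fun y => f y i) = x i := by
      have hm : ((Fintype.piFinset (Mseq (N + 1))).sup fun y => f y i)
          ∈ Fop f (Mseq (N + 1)) i := Finset.mem_Icc.2 ⟨hls, le_rfl⟩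
      rw [h1'] at hm
      exact Finset.mem_singleton.mp hm
    have hle1 : x i ≤ f x i := ha ▸ Finset.inf_le hxm
    have hle2 : f x i ≤ x i := hb ▸ Finset.le_sup (f := fun y => f y i) hxm
    exact le_antisymm hle2 hle1
  · right
    refine ⟨?_, hreg, hFop⟩
    intro i
    have hne : (Mseq (N + 1) i).Nonempty := hMne (N + 1) i
    rw [hMk N] at hne ⊢
    refine ⟨_, _, ?_, rfl⟩
    exact Finset.nonempty_Icc.1 hne

end DRN
end

section
/- Let f be a network, M ∈ X^□, and M̃ the extended forward orbit of M. Then M ⊆ M̃, and M̃ (as a set of regular states) is a trap set of S(f): every edge of S(f) starting at a state in M̃ ends at a state in M̃; in particular M̃ contains every state reachable in S(f) from a state in M. -/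
/-! Discrete regulatory networks (Siebert), shared definitions. -/

open Finset

namespace DRN

lemma efoSeq_subset_succ {n : ℕ} {p : Fin n → ℕ} (f : NState p → NState p)
    (M : SymState p) (k : ℕ) (j : Fin n) :
    efoSeq f M k j ⊆ efoSeq f M (k+1) j := by
  intro x hx
  simp only [efoSeq, Finset.mem_Icc]
  exact ⟨Finset.inf_le (Finset.mem_union_left _ hx),
         Finset.le_sup (f := id) (Finset.mem_union_left _ hx)⟩

lemma efoSeq_subset {n : ℕ} {p : Fin n → ℕ} (f : NState p → NState p)
    (M : SymState p) (k : ℕ) (j : Fin n) : M j ⊆ efoSeq f M k j := by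
  induction k with
  | zero => exact subset_rfl
  | succ k ih => exact ih.trans (efoSeq_subset_succ f M k j)

/-- `M ⊆ M̃`, the extended forward orbit `M̃` is a trap set of `S(f)`,
and `M̃` contains every state reachable in `S(f)` from a state in `M`. -/
theorem stmt4 {n : ℕ} {p : Fin n → ℕ} (f : NState p → NState p) (M Mt : SymState p)
    (hM : IsBox M) (hMt : ∃ N, ∀ k ≥ N, efoSeq f M k = Mt) :
    (∀ i, M i ⊆ Mt i) ∧
    IsTrapSet f {x | memBox x Mt} ∧
    (∀ x y : NState p, memBox x M → Relation.ReflTransGen (AsyncEdge f) x y →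
      memBox y Mt) := by
  obtain ⟨N, hN⟩ := hMt
  have hMtN : efoSeq f M N = Mt := hN N le_rfl
  have key : efoSeq f M (N+1) = Mt := hN (N+1) (Nat.le_succ N)
  have hfix : ∀ j, Mt j = Finset.Icc ((Mt j ∪ Fop f Mt j).inf id)
      ((Mt j ∪ Fop f Mt j).sup id) := by
    intro j
    conv_lhs => rw [← key]
    simp only [efoSeq, hMtN]
  have hsubMt : ∀ i, M i ⊆ Mt i := by
    intro i
    have := efoSeq_subset f M N i
    rwa [hMtN] at this
  have hconv : ∀ (j : Fin n) (a b c : Fin (p j + 1)), a ∈ Mt j → b ∈ Mt j →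
      a ≤ c → c ≤ b → c ∈ Mt j := by
    intro j a b c ha hb hac hcb
    rw [hfix j] at ha hb ⊢
    rw [Finset.mem_Icc] at ha hb ⊢
    exact ⟨le_trans ha.1 hac, le_trans hcb hb.2⟩
  have hFop : ∀ j, Fop f Mt j ⊆ Mt j := by
    intro j y hy
    rw [hfix j, Finset.mem_Icc]
    exact ⟨Finset.inf_le (Finset.mem_union_right _ hy),
           Finset.le_sup (f := id) (Finset.mem_union_right _ hy)⟩
  have hfmem : ∀ x, memBox x Mt → ∀ i, f x i ∈ Mt i := by
    intro x hx i
    apply hFop i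
    have hxmem : x ∈ Fintype.piFinset Mt := by
      rw [Fintype.mem_piFinset]; exact hx
    simp only [Fop, Finset.mem_Icc]
    exact ⟨Finset.inf_le hxmem, Finset.le_sup (f := fun x => f x i) hxmem⟩
  have hMne : ∀ i, (M i).Nonempty := by
    intro i
    obtain ⟨a, b, hab, h⟩ := hM i
    exact ⟨a, h ▸ Finset.mem_Icc.mpr ⟨le_rfl, hab⟩⟩
  have htrapstep : ∀ x, memBox x Mt → ∀ x', AsyncEdge f x x' → memBox x' Mt := by
    intro x hx x' hedge
    rcases hedge with ⟨rfl, _⟩ | ⟨i, hfi, hj, hcase⟩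
    · exact hx
    · intro j
      by_cases hji : j = i
      · subst hji
        rcases hcase with ⟨hlt, heq⟩ | ⟨hlt, heq⟩
        · refine hconv j (x j) (f x j) (x' j) (hx j) (hfmem x hx j) ?_ ?_
          · rw [Fin.le_def]; omega
          · rw [Fin.lt_def] at hlt; rw [Fin.le_def]; omega
        · refine hconv j (f x j) (x j) (x' j) (hfmem x hx j) (hx j) ?_ ?_
          · rw [Fin.lt_def] at hlt; rw [Fin.le_def]; omega
          · rw [Fin.le_def]; omega
      · rw [hj j hji]; exact hx j
  have htrap : IsTrapSet f {x | memBox x Mt} := by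
    constructor
    · refine ⟨fun i => (hMne i).choose, fun i => hsubMt i (hMne i).choose_spec⟩
    · exact htrapstep
  refine ⟨hsubMt, htrap, ?_⟩
  intro x y hx hreach
  induction hreach with
  | refl => exact fun i => hsubMt i (hx i)
  | tail _ hedge ih => exact htrapstep _ ih _ hedge


end DRN
end

section
/- Let f be a network, M a symbolic steady state of f, and Z_1,…,Z_m the components of G^θ(M). Let Z be the union of the vertex sets of an arbitrary subfamily of the components Z_j. If x, y ∈ M satisfy x_i = y_i for all i ∉ Z, then f_i(x) = f_i(y) for all i ∉ Z. -/
/-! Discrete regulatory networks (Siebert), shared definitions. -/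

open Finset

namespace DRN

lemma f_mem_of_steady {n : ℕ} {p : Fin n → ℕ} {f : NState p → NState p}
    {M : SymState p} (hM : Fop f M = M) {x : NState p} (hx : memBox x M)
    (i : Fin n) : f x i ∈ M i := by
  have hxp : x ∈ Fintype.piFinset M := by
    rw [Fintype.mem_piFinset]; exact hx
  rw [show M i = Fop f M i from by rw [hM]]
  simp only [Fop, Finset.mem_Icc]
  exact ⟨Finset.inf_le hxp, Finset.le_sup (f := fun x => f x i) hxp⟩

lemma fconst {n : ℕ} {p : Fin n → ℕ} {f : NState p → NState p}
    {M : SymState p} (hM : Fop f M = M) {i : Fin n} (hi : i ∉ JSet M)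
    {x y : NState p} (hx : memBox x M) (hy : memBox y M) : f x i = f y i := by
  have h1 := f_mem_of_steady hM hx i
  have h2 := f_mem_of_steady hM hy i
  have hcard : (M i).card ≤ 1 := not_lt.mp hi
  exact Finset.card_le_one.mp hcard _ h1 _ h2

lemma step_eq {n : ℕ} {p : Fin n → ℕ} {f : NState p → NState p} {M : SymState p}
    (hM : IsSymSteady f M) {C : Set (Set (Fin n))} (hC : ∀ V ∈ C, IsComponent f M V)
    {Z : Set (Fin n)} (hZ : Z = ⋃₀ C) {i j : Fin n} (hi : i ∉ Z) (hj : j ∈ Z)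
    {x x' : NState p} (hx : memBox x M) (hx' : memBox x' M)
    (hupd : ∀ l, l ≠ j → x' l = x l)
    (hstep : (((x' j : ℕ) : ℤ) = ((x j : ℕ) : ℤ) + 1) ∨
             (((x' j : ℕ) : ℤ) = ((x j : ℕ) : ℤ) + (-1))) :
    f x i = f x' i := by
  by_cases hiJ : i ∈ JSet M
  · by_contra hne
    rw [hZ] at hj hi
    obtain ⟨V, hVC, hjV⟩ := hj
    obtain ⟨i₀, hi₀J, hVeq⟩ := hC V hVC
    have hjJ : j ∈ JSet M := by rw [hVeq] at hjV; exact hjV.1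
    obtain ⟨c, hc, hstep'⟩ : ∃ c : ℤ, (c = 1 ∨ c = -1) ∧
        ((x' j : ℕ) : ℤ) = ((x j : ℕ) : ℤ) + c := by
      rcases hstep with h | h
      exacts [⟨1, Or.inl rfl, h⟩, ⟨-1, Or.inr rfl, h⟩]
    have hdne : (((f x' i : ℕ) : ℤ) - ((f x i : ℕ) : ℤ)) ≠ 0 := by
      intro h
      exact hne (Fin.ext (by omega))
    have hsgn : Int.sign (((f x' i : ℕ) : ℤ) - ((f x i : ℕ) : ℤ)) = 1 ∨
        Int.sign (((f x' i : ℕ) : ℤ) - ((f x i : ℕ) : ℤ)) = -1 := by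
      rcases lt_trichotomy (((f x' i : ℕ) : ℤ) - ((f x i : ℕ) : ℤ)) 0 with h | h | h
      · exact Or.inr (Int.sign_eq_neg_one_of_neg h)
      · exact absurd h hdne
      · exact Or.inl (Int.sign_eq_one_of_pos h)
    have hadj : ThetaAdj f M j i := by
      refine ⟨Int.sign (((f x' i : ℕ) : ℤ) - ((f x i : ℕ) : ℤ)) * c, ?_, hjJ, hiJ,
        x, x', hx, hx', c, hc, hupd, hstep', rfl⟩
      rcases hsgn with h | h <;> rcases hc with h' | h' <;> rw [h, h'] <;> norm_num
    have hiV : i ∈ V := by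
      rw [hVeq]
      rw [hVeq] at hjV
      exact ⟨hiJ, hjV.2.tail (Or.inl hadj)⟩
    exact hi ⟨V, hVC, hiV⟩
  · exact fconst hM.2.2 hiJ hx hx'

/-- for `Z` a union of (vertex sets of) components of `G^θ(M)`,
states `x, y ∈ M` agreeing outside `Z` have `f_i(x) = f_i(y)` for all `i ∉ Z`. -/
theorem stmt7 {n : ℕ} {p : Fin n → ℕ} (f : NState p → NState p) (M : SymState p)
    (hM : IsSymSteady f M)
    (C : Set (Set (Fin n))) (hC : ∀ V ∈ C, IsComponent f M V)
    (Z : Set (Fin n)) (hZ : Z = ⋃₀ C)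
    (x y : NState p) (hx : memBox x M) (hy : memBox y M)
    (hxy : ∀ i, i ∉ Z → x i = y i) :
    ∀ i, i ∉ Z → f x i = f y i := by
  intro i hi
  suffices H : ∀ N : ℕ, ∀ x y : NState p, memBox x M → memBox y M →
      (∀ j, j ∉ Z → x j = y j) →
      (∑ l, (((x l : ℕ) : ℤ) - ((y l : ℕ) : ℤ)).natAbs) ≤ N → f x i = f y i from
    H _ x y hx hy hxy le_rfl
  intro N
  induction N with
  | zero =>
    intro x y hx' hy' hxy' hsum
    have hxyeq : x = y := by
      funext l
      have h1 := Finset.sum_eq_zero_iff.mp (Nat.le_zero.mp hsum) l (Finset.mem_univ l)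
      exact Fin.ext (by omega)
    rw [hxyeq]
  | succ N ih =>
    intro x y hx' hy' hxy' hsum
    by_cases heq : x = y
    · rw [heq]
    obtain ⟨j, hj⟩ := Function.ne_iff.mp heq
    have hjZ : j ∈ Z := by
      by_contra h
      exact hj (hxy' j h)
    have hjv : (x j : ℕ) ≠ (y j : ℕ) := fun h => hj (Fin.ext h)
    obtain ⟨a, b, hab, hMj⟩ := hM.1 j
    have hxa : (a : ℕ) ≤ (x j : ℕ) ∧ (x j : ℕ) ≤ (b : ℕ) := by
      have h := hx' j; rw [hMj, Finset.mem_Icc] at h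
      exact ⟨Fin.le_def.mp h.1, Fin.le_def.mp h.2⟩
    have hya : (a : ℕ) ≤ (y j : ℕ) ∧ (y j : ℕ) ≤ (b : ℕ) := by
      have h := hy' j; rw [hMj, Finset.mem_Icc] at h
      exact ⟨Fin.le_def.mp h.1, Fin.le_def.mp h.2⟩
    obtain ⟨vn, hvp, hva, hvb, hvc, hvabs⟩ :
        ∃ vn : ℕ, vn ≤ p j ∧ (a : ℕ) ≤ vn ∧ vn ≤ (b : ℕ) ∧
          (((vn : ℤ) = ((x j : ℕ) : ℤ) + 1) ∨ ((vn : ℤ) = ((x j : ℕ) : ℤ) + (-1))) ∧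
          ((vn : ℤ) - ((y j : ℕ) : ℤ)).natAbs + 1 =
            (((x j : ℕ) : ℤ) - ((y j : ℕ) : ℤ)).natAbs := by
      have h1 := (x j).isLt
      have h2 := (y j).isLt
      rcases Nat.lt_or_ge (x j : ℕ) (y j : ℕ) with h | h
      · exact ⟨(x j : ℕ) + 1, by omega, by omega, by omega, Or.inl (by omega),
          by omega⟩
      · exact ⟨(x j : ℕ) - 1, by omega, by omega, by omega, Or.inr (by omega),
          by omega⟩
    set v : Fin (p j + 1) := ⟨vn, Nat.lt_succ_of_le hvp⟩ with hvdef
    set x'' := Function.update x j v with hx''def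
    have hupd : ∀ l, l ≠ j → x'' l = x l := fun l hl => Function.update_of_ne hl _ _
    have hx''j : (x'' j : ℕ) = vn := by rw [hx''def, Function.update_self]
    have hx''M : memBox x'' M := by
      intro l
      by_cases hl : l = j
      · subst hl
        rw [hx''def, Function.update_self, hMj, Finset.mem_Icc]
        exact ⟨Fin.le_def.mpr hva, Fin.le_def.mpr hvb⟩
      · rw [hupd l hl]; exact hx' l
    have hstep : (((x'' j : ℕ) : ℤ) = ((x j : ℕ) : ℤ) + 1) ∨
        (((x'' j : ℕ) : ℤ) = ((x j : ℕ) : ℤ) + (-1)) := by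
      rw [hx''j]; exact hvc
    have h1 : f x i = f x'' i :=
      step_eq hM hC hZ hi hjZ hx' hx''M hupd hstep
    have hxy'' : ∀ l, l ∉ Z → x'' l = y l := by
      intro l hl
      have hlj : l ≠ j := fun h => hl (h ▸ hjZ)
      rw [hupd l hlj]; exact hxy' l hl
    have hsum' : (∑ l, (((x'' l : ℕ) : ℤ) - ((y l : ℕ) : ℤ)).natAbs) ≤ N := by
      have h2 : (∑ l, (((x'' l : ℕ) : ℤ) - ((y l : ℕ) : ℤ)).natAbs) + 1 =
          ∑ l, (((x l : ℕ) : ℤ) - ((y l : ℕ) : ℤ)).natAbs := by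
        rw [← Finset.sum_erase_add _ _ (Finset.mem_univ j),
            ← Finset.sum_erase_add _ _ (Finset.mem_univ j)]
        rw [Finset.sum_congr rfl
          (fun l hl => by rw [hupd l (Finset.ne_of_mem_erase hl)])]
        rw [hx''j]
        omega
      omega
    exact h1.trans (ih x'' y hx''M hy' hxy'' hsum')

end DRN
end

section
/- Let f be a network, M a symbolic steady state of f, and Z the union of the vertex sets of an arbitrary subfamily of the components of G^θ(M). If M' ∈ X^□ satisfies M'_i = M_i for all i ∉ Z and M'_i ⊆ M_i for all i ∈ Z, then F_i(M') = F_i(M) = M_i = M'_i for all i ∉ Z. -/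
/-! Discrete regulatory networks (Siebert), shared definitions. -/

open Finset

namespace DRN

/-- If `F(M) = M` and `M i` is a singleton, then `f · i` is constant on `M`. -/
lemma constOn {n : ℕ} {p : Fin n → ℕ} (f : NState p → NState p) (M : SymState p)
    (hM : Fop f M = M) {i : Fin n} (hi : (M i).card = 1) :
    ∀ x ∈ Fintype.piFinset M, ∀ y ∈ Fintype.piFinset M, f x i = f y i := by
  intro x hx y hy
  obtain ⟨c, hc⟩ := Finset.card_eq_one.mp hi
  have hIcc : Finset.Icc ((Fintype.piFinset M).inf fun x => f x i)
      ((Fintype.piFinset M).sup fun x => f x i) = {c} := by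
    have := congrFun hM i
    simpa [Fop, hc] using this
  have hcmem : c ∈ Finset.Icc ((Fintype.piFinset M).inf fun x => f x i)
      ((Fintype.piFinset M).sup fun x => f x i) := by rw [hIcc]; simp
  rw [Finset.mem_Icc] at hcmem
  have hinfmem : ((Fintype.piFinset M).inf fun x => f x i) ∈ ({c} : Finset _) := by
    rw [← hIcc, Finset.mem_Icc]; exact ⟨le_refl _, le_trans hcmem.1 hcmem.2⟩
  have hsupmem : ((Fintype.piFinset M).sup fun x => f x i) ∈ ({c} : Finset _) := by
    rw [← hIcc, Finset.mem_Icc]; exact ⟨le_trans hcmem.1 hcmem.2, le_refl _⟩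
  rw [Finset.mem_singleton] at hinfmem hsupmem
  have h1 : f x i = c :=
    le_antisymm (hsupmem ▸ Finset.le_sup (f := fun x => f x i) hx)
      (hinfmem ▸ Finset.inf_le (f := fun x => f x i) hx)
  have h2 : f y i = c :=
    le_antisymm (hsupmem ▸ Finset.le_sup (f := fun x => f x i) hy)
      (hinfmem ▸ Finset.inf_le (f := fun x => f x i) hy)
  rw [h1, h2]

/-- One-step invariance: if `i ∉ Z` receives no `G^θ(M)`-edge from `Z`, then a unit
change of a `Z`-coordinate inside `M` does not change `f · i`. -/
lemma stepInvar {n : ℕ} {p : Fin n → ℕ} (f : NState p → NState p) (M : SymState p)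
    (hM : IsSymSteady f M) (Z : Set (Fin n)) {i : Fin n}
    (hno : ∀ j ∈ Z, ¬ ThetaAdj f M j i) {j : Fin n} (hjZ : j ∈ Z)
    (x x' : NState p) (hx : memBox x M) (hx' : memBox x' M)
    (hupd : ∀ l, l ≠ j → x' l = x l) (c : ℤ) (hc : c = 1 ∨ c = -1)
    (hstep : ((x' j : ℕ) : ℤ) = ((x j : ℕ) : ℤ) + c) : f x' i = f x i := by
  by_contra h
  by_cases hJ : 1 < (M i).card
  · -- there is a theta edge from j to i
    have hd : (((f x' i : ℕ) : ℤ) - ((f x i : ℕ) : ℤ)) ≠ 0 := by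
      intro h0
      exact h (Fin.ext (by omega))
    have hjJ : j ∈ JSet M := by
      have hne : x' j ≠ x j := by
        intro he; rw [he] at hstep; omega
      exact Finset.one_lt_card.mpr ⟨x' j, hx' j, x j, hx j, hne⟩
    set s : ℤ := Int.sign (((f x' i : ℕ) : ℤ) - ((f x i : ℕ) : ℤ)) with hs
    have hs1 : s = 1 ∨ s = -1 := by
      rcases lt_or_gt_of_ne hd with h' | h'
      · exact Or.inr (Int.sign_eq_neg_one_iff_neg.mpr h')
      · exact Or.inl (Int.sign_eq_one_iff_pos.mpr h')
    have hedge : GEdgeRestr f M j i (s * c) :=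
      ⟨x, x', hx, hx', c, hc, hupd, hstep, rfl⟩
    have hadj : ThetaAdj f M j i := by
      refine ⟨s * c, ?_, hjJ, hJ, hedge⟩
      rcases hs1 with h1 | h1 <;> rcases hc with h2 | h2 <;> rw [h1, h2] <;> norm_num
    exact hno j hjZ hadj
  · -- M i is a singleton, so f · i is constant on M
    have hcard : (M i).card = 1 := by
      have : (M i).Nonempty := by
        obtain ⟨a, b, hab, hMi⟩ := hM.1 i
        rw [hMi]; exact Finset.nonempty_Icc.mpr hab
      have := Finset.card_pos.mpr this
      omega
    exact h (constOn f M hM.2.2 hcard x' (Fintype.mem_piFinset.mpr hx')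
      x (Fintype.mem_piFinset.mpr hx))

/-- Invariance of `f · i` under arbitrary changes of `Z`-coordinates inside `M`. -/
lemma invar {n : ℕ} {p : Fin n → ℕ} (f : NState p → NState p) (M : SymState p)
    (hM : IsSymSteady f M) (Z : Set (Fin n)) {i : Fin n}
    (hno : ∀ j ∈ Z, ¬ ThetaAdj f M j i) :
    ∀ d : ℕ, ∀ x y : NState p, memBox x M → memBox y M →
      (∀ l, l ∉ Z → x l = y l) →
      (∑ j, (((x j : ℕ) : ℤ) - ((y j : ℕ) : ℤ)).natAbs) ≤ d → f x i = f y i := by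
  intro d
  induction d with
  | zero =>
    intro x y hx hy _ hsum
    have : ∀ l, x l = y l := by
      intro l
      have h0 : (((x l : ℕ) : ℤ) - ((y l : ℕ) : ℤ)).natAbs = 0 := by
        have := Finset.sum_eq_zero_iff.mp (Nat.le_zero.mp hsum) l (Finset.mem_univ l)
        exact this
      exact Fin.ext (by omega)
    rw [funext this]
  | succ d ih =>
    intro x y hx hy hagree hsum
    by_cases hxy : x = y
    · rw [hxy]
    · have ⟨j, hj⟩ : ∃ j, x j ≠ y j := by
        by_contra hcon
        push_neg at hcon
        exact hxy (funext hcon)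
      have hjZ : j ∈ Z := by
        by_contra hjz
        exact hj (hagree j hjz)
      obtain ⟨a, b, hab, hMj⟩ := hM.1 j
      have hxa : a ≤ x j ∧ x j ≤ b := Finset.mem_Icc.mp (hMj ▸ hx j)
      have hya : a ≤ y j ∧ y j ≤ b := Finset.mem_Icc.mp (hMj ▸ hy j)
      have hjne : (x j : ℕ) ≠ (y j : ℕ) := fun h => hj (Fin.ext h)
      -- choose the new value of coordinate j, one step toward y j
      have hylt : (y j : ℕ) < p j + 1 := (y j).isLt
      have hxlt : (x j : ℕ) < p j + 1 := (x j).isLt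
      rcases Nat.lt_or_ge (x j : ℕ) (y j : ℕ) with hlt | hge
      all_goals {
        first
        | (have hc : ((⟨(x j : ℕ) + 1, by omega⟩ : Fin (p j + 1)) : ℕ) = (x j : ℕ) + 1 := rfl
           set v : Fin (p j + 1) := ⟨(x j : ℕ) + 1, by omega⟩ with hv
           have hcval : ((v : ℕ) : ℤ) = ((x j : ℕ) : ℤ) + 1 := by rw [hc]; push_cast; ring
           have hcpm : (1 : ℤ) = 1 ∨ (1 : ℤ) = -1 := Or.inl rfl
           have hvy : (((v : ℕ) : ℤ) - ((y j : ℕ) : ℤ)).natAbs + 1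
               = (((x j : ℕ) : ℤ) - ((y j : ℕ) : ℤ)).natAbs := by rw [hc]; omega
           have hvIcc : a ≤ v ∧ v ≤ b := by
             constructor
             · exact le_trans hxa.1 (by rw [Fin.le_def, hc]; omega)
             · refine le_trans ?_ hya.2
               rw [Fin.le_def, hc]
               have := Fin.lt_def.mpr hlt
               omega)
        | (have hge' : (y j : ℕ) < (x j : ℕ) := by omega
           have hc : ((⟨(x j : ℕ) - 1, by omega⟩ : Fin (p j + 1)) : ℕ) = (x j : ℕ) - 1 := rfl
           set v : Fin (p j + 1) := ⟨(x j : ℕ) - 1, by omega⟩ with hv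
           have hcval : ((v : ℕ) : ℤ) = ((x j : ℕ) : ℤ) + (-1) := by rw [hc]; push_cast [Nat.cast_sub (by omega : 1 ≤ (x j : ℕ))]; ring
           have hcpm : (-1 : ℤ) = 1 ∨ (-1 : ℤ) = -1 := Or.inr rfl
           have hvy : (((v : ℕ) : ℤ) - ((y j : ℕ) : ℤ)).natAbs + 1
               = (((x j : ℕ) : ℤ) - ((y j : ℕ) : ℤ)).natAbs := by rw [hc]; omega
           have hvIcc : a ≤ v ∧ v ≤ b := by
             constructor
             · refine le_trans hya.1 ?_
               rw [Fin.le_def, hc]; omega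
             · exact le_trans (by rw [Fin.le_def, hc]; omega) hxa.2)
        -- now common part
        set x' : NState p := Function.update x j v with hx'def
        have hx'j : x' j = v := Function.update_self j v x
        have hupd : ∀ l, l ≠ j → x' l = x l := fun l hl => Function.update_of_ne hl v x
        have hx' : memBox x' M := by
          intro l
          by_cases hlj : l = j
          · subst hlj; rw [hx'j, hMj]; exact Finset.mem_Icc.mpr hvIcc
          · rw [hupd l hlj]; exact hx l
        have hfstep : f x' i = f x i :=
          stepInvar f M hM Z hno hjZ x x' hx hx' hupd _ hcpm (by rw [hx'j]; exact hcval)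
        have hsum' : (∑ l, (((x' l : ℕ) : ℤ) - ((y l : ℕ) : ℤ)).natAbs) ≤ d := by
          have e1 : (∑ l ∈ Finset.univ.erase j, (((x' l : ℕ) : ℤ) - ((y l : ℕ) : ℤ)).natAbs)
              + (((x' j : ℕ) : ℤ) - ((y j : ℕ) : ℤ)).natAbs
              = ∑ l, (((x' l : ℕ) : ℤ) - ((y l : ℕ) : ℤ)).natAbs :=
            Finset.sum_erase_add Finset.univ _ (Finset.mem_univ j)
          have e2 : (∑ l ∈ Finset.univ.erase j, (((x l : ℕ) : ℤ) - ((y l : ℕ) : ℤ)).natAbs)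
              + (((x j : ℕ) : ℤ) - ((y j : ℕ) : ℤ)).natAbs
              = ∑ l, (((x l : ℕ) : ℤ) - ((y l : ℕ) : ℤ)).natAbs :=
            Finset.sum_erase_add Finset.univ _ (Finset.mem_univ j)
          have e3 : (∑ l ∈ Finset.univ.erase j, (((x' l : ℕ) : ℤ) - ((y l : ℕ) : ℤ)).natAbs)
              = ∑ l ∈ Finset.univ.erase j, (((x l : ℕ) : ℤ) - ((y l : ℕ) : ℤ)).natAbs := by
            refine Finset.sum_congr rfl fun l hl => ?_
            rw [hupd l (Finset.ne_of_mem_erase hl)]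
          rw [hx'j] at e1
          omega
        have hagree' : ∀ l, l ∉ Z → x' l = y l := by
          intro l hl
          rw [hupd l (fun h => hl (h ▸ hjZ))]
          exact hagree l hl
        rw [← hfstep]
        exact ih x' y hx' hy hagree' hsum'
      }

/-- for `Z` a union of components of `G^θ(M)` and `M' ∈ X^□` with
`M'_i = M_i` outside `Z` and `M'_i ⊆ M_i` on `Z`, one has
`F_i(M') = F_i(M) = M_i = M'_i` for all `i ∉ Z`. -/
theorem stmt8 {n : ℕ} {p : Fin n → ℕ} (f : NState p → NState p) (M : SymState p)
    (hM : IsSymSteady f M)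
    (C : Set (Set (Fin n))) (hC : ∀ V ∈ C, IsComponent f M V)
    (Z : Set (Fin n)) (hZ : Z = ⋃₀ C)
    (M' : SymState p) (hM' : IsBox M')
    (hout : ∀ i, i ∉ Z → M' i = M i) (hin : ∀ i ∈ Z, M' i ⊆ M i) :
    ∀ i, i ∉ Z → Fop f M' i = Fop f M i ∧ Fop f M i = M i ∧ M i = M' i := by
  intro i hiZ
  -- M' is pointwise contained in M
  have hsub : ∀ j, M' j ⊆ M j := by
    intro j
    by_cases hj : j ∈ Z
    · exact hin j hj
    · rw [hout j hj]
  have hpisub : Fintype.piFinset M' ⊆ Fintype.piFinset M := by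
    intro x hx
    rw [Fintype.mem_piFinset] at hx ⊢
    exact fun l => hsub l (hx l)
  -- a point of M'
  have hch : ∀ l, ∃ a, a ∈ M' l := by
    intro l
    obtain ⟨a, b, hab, h⟩ := hM' l
    exact ⟨a, by rw [h]; exact Finset.mem_Icc.mpr ⟨le_refl _, hab⟩⟩
  obtain ⟨y0, hy0⟩ : ∃ y0 : NState p, memBox y0 M' := by
    choose y0 hy0 using hch
    exact ⟨y0, hy0⟩
  -- no theta edge from Z into i
  have hno : ∀ j ∈ Z, ¬ ThetaAdj f M j i := by
    intro j hjZ hadj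
    rw [hZ] at hjZ hiZ
    obtain ⟨V, hVC, hjV⟩ := hjZ
    obtain ⟨i0, hi0J, hVeq⟩ := hC V hVC
    have hjconn : ThetaConn f M i0 j := (hVeq ▸ hjV).2
    obtain ⟨ε, hε, hedge⟩ := hadj
    have hiJ : i ∈ JSet M := hedge.2.1
    have hiconn : ThetaConn f M i0 i := hjconn.tail (Or.inl ⟨ε, hε, hedge⟩)
    exact hiZ ⟨V, hVC, hVeq ▸ (⟨hiJ, hiconn⟩ : i ∈ JSet M ∧ ThetaConn f M i0 i)⟩
  -- piFinset M is nonempty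
  have hMne : (Fintype.piFinset M).Nonempty := by
    have hch2 : ∀ l, ∃ a, a ∈ M l := by
      intro l
      obtain ⟨a, b, hab, h⟩ := hM.1 l
      exact ⟨a, by rw [h]; exact Finset.mem_Icc.mpr ⟨le_refl _, hab⟩⟩
    choose z0 hz0 using hch2
    exact ⟨z0, Fintype.mem_piFinset.mpr hz0⟩
  classical
  -- transfer an extremizer of f · i on M into M'
  have key : ∀ x : NState p, memBox x M → ∃ x' : NState p, memBox x' M' ∧ f x' i = f x i := by
    intro x hx
    set x' : NState p := fun l => if l ∈ Z then y0 l else x l with hx'def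
    have hx'M' : memBox x' M' := by
      intro l
      by_cases hl : l ∈ Z
      · simpa [hx'def, hl] using hy0 l
      · simpa [hx'def, hl, hout l hl] using hx l
    have hx'M : memBox x' M := fun l => hsub l (hx'M' l)
    refine ⟨x', hx'M', ?_⟩
    refine invar f M hM Z hno
      (∑ j, (((x' j : ℕ) : ℤ) - ((x j : ℕ) : ℤ)).natAbs) x' x hx'M hx ?_ (le_refl _)
    intro l hl
    simp [hx'def, hl]
  -- inf equality
  have hinf : ((Fintype.piFinset M').inf fun x => f x i)
      = ((Fintype.piFinset M).inf fun x => f x i) := by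
    refine le_antisymm ?_ (Finset.inf_mono hpisub)
    obtain ⟨x, hxmem, hxeq⟩ := Finset.exists_mem_eq_inf (Fintype.piFinset M) hMne
      (fun x => f x i)
    have hxeq' : ((Fintype.piFinset M).inf fun y => f y i) = f x i := hxeq
    obtain ⟨x', hx', hfx'⟩ := key x (Fintype.mem_piFinset.mp hxmem)
    rw [hxeq', ← hfx']
    exact Finset.inf_le (f := fun y => f y i) (Fintype.mem_piFinset.mpr hx')
  have hsup : ((Fintype.piFinset M').sup fun x => f x i)
      = ((Fintype.piFinset M).sup fun x => f x i) := by
    refine le_antisymm (Finset.sup_mono hpisub) ?_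
    obtain ⟨x, hxmem, hxeq⟩ := Finset.exists_mem_eq_sup (Fintype.piFinset M) hMne
      (fun x => f x i)
    have hxeq' : ((Fintype.piFinset M).sup fun y => f y i) = f x i := hxeq
    obtain ⟨x', hx', hfx'⟩ := key x (Fintype.mem_piFinset.mp hxmem)
    rw [hxeq', ← hfx']
    exact Finset.le_sup (f := fun y => f y i) (Fintype.mem_piFinset.mpr hx')
  refine ⟨?_, congrFun hM.2.2 i, (hout i hiZ).symm⟩
  unfold Fop
  rw [hinf, hsup]


end DRN
end

section
/- Let f be a network, M a symbolic steady state of f, and Z a component of G^θ(M) with vertex set V^Z. Then for every z ∈ X^Z and every i ∈ V^Z, the interval F_i(ρ^Z(z)) is a singleton contained in M_i; hence f^Z = π^Z ∘ F ∘ ρ^Z maps regular states to regular states and is a well-defined function X^Z → X^Z. -/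
/-! Discrete regulatory networks (Siebert), shared definitions. -/

open Finset

namespace DRN

def dist' {n : ℕ} {p : Fin n → ℕ} (x y : NState p) : ℕ :=
  ∑ j, (((x j : ℕ) - (y j : ℕ)) + ((y j : ℕ) - (x j : ℕ)))

lemma const_on_box {n : ℕ} {p : Fin n → ℕ} {α : Type*} (B : SymState p)
    (hB : ∀ j, ∃ a b : Fin (p j + 1), B j = Finset.Icc a b)
    (g : NState p → α)
    (H : ∀ x x' : NState p, memBox x B → memBox x' B → ∀ j,
      (∀ l, l ≠ j → x' l = x l) → (x' j : ℕ) = (x j : ℕ) + 1 → g x' = g x) :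
    ∀ x y : NState p, memBox x B → memBox y B → g x = g y := by
  suffices h : ∀ d : ℕ, ∀ x y : NState p, memBox x B → memBox y B →
      dist' x y = d → g x = g y by
    intro x y hx hy; exact h _ x y hx hy rfl
  intro d
  induction d using Nat.strong_induction_on with
  | _ d ih =>
    intro x y hx hy hd
    rcases Nat.eq_zero_or_pos d with h0 | hpos
    · subst h0
      have hall : ∀ j, x j = y j := fun j => by
        have := Finset.sum_eq_zero_iff.mp hd j (mem_univ j)
        exact Fin.ext (by omega)
      exact congrArg g (funext hall)
    · -- find a coordinate where they differ
      have hex : ∃ j, (x j : ℕ) ≠ (y j : ℕ) := by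
        by_contra hcon
        push_neg at hcon
        have : dist' x y = 0 := Finset.sum_eq_zero (fun j _ => by
          have := hcon j; omega)
        omega
      obtain ⟨j, hj⟩ := hex
      obtain ⟨a, b, hab⟩ := hB j
      -- helper to do one step then recurse
      rcases lt_or_gt_of_ne hj with hlt | hgt
      · -- step x up in coordinate j
        have hxj1 : (x j : ℕ) + 1 < p j + 1 := by
          have := (y j).isLt; omega
        set x' : NState p := Function.update x j ⟨(x j : ℕ) + 1, hxj1⟩ with hx'
        have hx'B : memBox x' B := by
          intro l
          by_cases hl : l = j
          · subst hl
            have hxm := hx l; have hym := hy l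
            rw [hab] at hxm hym ⊢
            simp only [Finset.mem_Icc, Fin.le_def] at hxm hym ⊢
            simp only [hx', Function.update_self]
            constructor <;> [skip; skip] <;>
              · simp -failIfUnchanged only [Fin.le_def] at *
                omega
          · simp only [hx', Function.update_of_ne hl]; exact hx l
        have hstep : g x' = g x := by
          apply H x x' hx hx'B j
          · intro l hl; simp [hx', Function.update_of_ne hl]
          · simp [hx']
        have hdist : dist' x' y = d - 1 := by
          have h1 : dist' x y = (((x j : ℕ) - (y j : ℕ)) + ((y j : ℕ) - (x j : ℕ)))
              + ∑ l ∈ univ.erase j, (((x l : ℕ) - (y l : ℕ)) + ((y l : ℕ) - (x l : ℕ))) := by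
            exact (Finset.add_sum_erase univ _ (mem_univ j)).symm
          have h2 : dist' x' y = (((x' j : ℕ) - (y j : ℕ)) + ((y j : ℕ) - (x' j : ℕ)))
              + ∑ l ∈ univ.erase j, (((x' l : ℕ) - (y l : ℕ)) + ((y l : ℕ) - (x' l : ℕ))) := by
            exact (Finset.add_sum_erase univ _ (mem_univ j)).symm
          have h3 : ∑ l ∈ univ.erase j, (((x' l : ℕ) - (y l : ℕ)) + ((y l : ℕ) - (x' l : ℕ)))
              = ∑ l ∈ univ.erase j, (((x l : ℕ) - (y l : ℕ)) + ((y l : ℕ) - (x l : ℕ))) := by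
            apply Finset.sum_congr rfl
            intro l hl
            rw [hx', Function.update_of_ne (Finset.ne_of_mem_erase hl)]
          have hx'j : (x' j : ℕ) = (x j : ℕ) + 1 := by simp [hx']
          omega
        rw [hstep.symm]
        exact ih (d - 1) (by omega) x' y hx'B hy hdist
      · -- step y up in coordinate j
        have hyj1 : (y j : ℕ) + 1 < p j + 1 := by
          have := (x j).isLt; omega
        set y' : NState p := Function.update y j ⟨(y j : ℕ) + 1, hyj1⟩ with hy'
        have hy'B : memBox y' B := by
          intro l
          by_cases hl : l = j
          · subst hl
            have hxm := hx l; have hym := hy l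
            rw [hab] at hxm hym ⊢
            simp only [Finset.mem_Icc, Fin.le_def] at hxm hym ⊢
            simp only [hy', Function.update_self]
            constructor <;>
              · simp -failIfUnchanged only [Fin.le_def] at *
                omega
          · simp only [hy', Function.update_of_ne hl]; exact hy l
        have hstep : g y' = g y := by
          apply H y y' hy hy'B j
          · intro l hl; simp [hy', Function.update_of_ne hl]
          · simp [hy']
        have hdist : dist' x y' = d - 1 := by
          have h1 : dist' x y = (((x j : ℕ) - (y j : ℕ)) + ((y j : ℕ) - (x j : ℕ)))
              + ∑ l ∈ univ.erase j, (((x l : ℕ) - (y l : ℕ)) + ((y l : ℕ) - (x l : ℕ))) := by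
            exact (Finset.add_sum_erase univ _ (mem_univ j)).symm
          have h2 : dist' x y' = (((x j : ℕ) - (y' j : ℕ)) + ((y' j : ℕ) - (x j : ℕ)))
              + ∑ l ∈ univ.erase j, (((x l : ℕ) - (y' l : ℕ)) + ((y' l : ℕ) - (x l : ℕ))) := by
            exact (Finset.add_sum_erase univ _ (mem_univ j)).symm
          have h3 : ∑ l ∈ univ.erase j, (((x l : ℕ) - (y' l : ℕ)) + ((y' l : ℕ) - (x l : ℕ)))
              = ∑ l ∈ univ.erase j, (((x l : ℕ) - (y l : ℕ)) + ((y l : ℕ) - (x l : ℕ))) := by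
            apply Finset.sum_congr rfl
            intro l hl
            rw [hy', Function.update_of_ne (Finset.ne_of_mem_erase hl)]
          have hy'j : (y' j : ℕ) = (y j : ℕ) + 1 := by simp [hy']
          omega
        rw [← hstep]
        exact ih (d - 1) (by omega) x y' hx hy'B hdist


/-- for a component `Z` of `G^θ(M)` with vertex set `V`, `F_i(ρ^Z(z))`
is a singleton contained in `M_i` for every `z ∈ X^Z` and `i ∈ V`; hence
`f^Z = π^Z ∘ F ∘ ρ^Z` maps regular states to regular states and is a
well-defined function `X^Z → X^Z`. -/
theorem stmt9 {n : ℕ} {p : Fin n → ℕ} (f : NState p → NState p) (M : SymState p)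
    (hM : IsSymSteady f M) (V : Set (Fin n)) (hV : IsComponent f M V) :
    ∀ z : MState p V, memBoxV M V z →
      (∀ i : V, ∃ v ∈ M i.1, Fop f (rhoV M V z) i.1 = {v}) ∧
      memBoxV M V (modFun f M V z) := by
  obtain ⟨hBox, -, hF⟩ := hM
  obtain ⟨i0, hi0J, hVeq⟩ := hV
  intro z hz
  set B : SymState p := rhoV M V z with hBdef
  -- each component of B is an interval
  have hBbox : ∀ j, ∃ a b : Fin (p j + 1), B j = Finset.Icc a b := by
    intro j
    by_cases h : j ∈ V
    · exact ⟨z ⟨j, h⟩, z ⟨j, h⟩, by simp [hBdef, rhoV, h]⟩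
    · obtain ⟨a, b, -, hab⟩ := hBox j
      exact ⟨a, b, by simp [hBdef, rhoV, h, hab]⟩
  -- B ⊆ M componentwise
  have hBsub : ∀ j, B j ⊆ M j := by
    intro j
    by_cases h : j ∈ V
    · intro v hv
      simp only [hBdef, rhoV, dif_pos h, Finset.mem_singleton] at hv
      subst hv; exact hz ⟨j, h⟩
    · simp [hBdef, rhoV, h]
  have hBmem : ∀ x : NState p, memBox x B → memBox x M :=
    fun x hx j => hBsub j (hx j)
  -- a point of B
  have hMne : ∀ j, (M j).Nonempty := by
    intro j
    obtain ⟨a, b, hab, h⟩ := hBox j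
    exact ⟨a, h ▸ Finset.mem_Icc.mpr ⟨le_refl a, hab⟩⟩
  classical
  set x0 : NState p := fun j => if h : j ∈ V then z ⟨j, h⟩ else (hMne j).choose with hx0
  have hx0B : memBox x0 B := by
    intro j
    by_cases h : j ∈ V
    · simp [hx0, hBdef, rhoV, h]
    · simpa [hx0, hBdef, rhoV, h] using (hMne j).choose_spec
  -- f i is constant on B for i ∈ V
  have hconst : ∀ i : V, ∀ x y : NState p, memBox x B → memBox y B →
      f x i.1 = f y i.1 := by
    rintro ⟨i, hiV⟩
    apply const_on_box B hBbox (fun x => f x i)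
    intro x x' hxB hx'B j hne hj1
    by_contra hneq
    -- j must be in V, else an edge j → i forces j ∈ V; either way contradiction
    by_cases hjV : j ∈ V
    · -- B j is a singleton, but x j ≠ x' j
      have h1 : x j ∈ B j := hxB j
      have h2 : x' j ∈ B j := hx'B j
      simp only [hBdef, rhoV, dif_pos hjV, Finset.mem_singleton] at h1 h2
      have h3 : x' j = x j := h2.trans h1.symm
      rw [h3] at hj1
      omega
    · -- construct the theta edge from j to i
      have hJj : j ∈ JSet M := by
        have h1 : x j ∈ M j := hBmem x hxB j
        have h2 : x' j ∈ M j := hBmem x' hx'B j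
        have hne' : x j ≠ x' j := by
          intro h; rw [h] at hj1; omega
        exact Finset.one_lt_card.mpr ⟨x j, h1, x' j, h2, hne'⟩
      have hJi : i ∈ JSet M ∧ ThetaConn f M i0 i := by
        have h2 : i ∈ V := hiV; rwa [hVeq] at h2
      have hdiff : (((f x' i : ℕ) : ℤ) - ((f x i : ℕ) : ℤ)) ≠ 0 := by
        intro h
        apply hneq
        exact Fin.ext (by omega)
      set ε : ℤ := Int.sign (((f x' i : ℕ) : ℤ) - ((f x i : ℕ) : ℤ)) with hε
      have hεpm : ε = 1 ∨ ε = -1 := by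
        rcases lt_or_gt_of_ne hdiff with h | h
        · exact Or.inr (by rw [hε, Int.sign_eq_neg_one_iff_neg.mpr h])
        · exact Or.inl (by rw [hε, Int.sign_eq_one_iff_pos.mpr h])
      have hedge : ThetaAdj f M j i := by
        refine ⟨ε, hεpm, hJj, hJi.1, x, x', hBmem x hxB, hBmem x' hx'B, 1,
          Or.inl rfl, hne, by omega, by rw [hε]; ring⟩
      have hjVmem : j ∈ V := by
        rw [hVeq]
        exact ⟨hJj, hJi.2.tail (Or.inr hedge)⟩
      exact hjV hjVmem
  -- the common value
  have hkey : ∀ i : V, ∃ v ∈ M i.1, Fop f (rhoV M V z) i.1 = {v} := by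
    intro i
    refine ⟨f x0 i.1, ?_, ?_⟩
    · -- f x0 i ∈ M i, since Fop f M = M
      have hx0M : x0 ∈ Fintype.piFinset M := by
        rw [Fintype.mem_piFinset]; exact hBmem x0 hx0B
      have h1 : f x0 i.1 ∈ Fop f M i.1 := by
        rw [Fop, Finset.mem_Icc]
        exact ⟨Finset.inf_le (f := fun x => f x i.1) hx0M, Finset.le_sup (f := fun x => f x i.1) hx0M⟩
      rw [hF] at h1; exact h1
    · -- Fop f B i = {f x0 i}
      have hx0pi : x0 ∈ Fintype.piFinset B := by
        rw [Fintype.mem_piFinset]; exact hx0B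
      have hinf : ((Fintype.piFinset B).inf fun x => f x i.1) = f x0 i.1 := by
        apply le_antisymm
        · exact Finset.inf_le (f := fun x => f x i.1) hx0pi
        · apply Finset.le_inf
          intro x hx
          rw [Fintype.mem_piFinset] at hx
          exact le_of_eq (hconst i x0 x hx0B hx)
      have hsup : ((Fintype.piFinset B).sup fun x => f x i.1) = f x0 i.1 := by
        apply le_antisymm
        · apply Finset.sup_le
          intro x hx
          rw [Fintype.mem_piFinset] at hx
          exact le_of_eq (hconst i x x0 hx hx0B)
        · exact Finset.le_sup (f := fun x => f x i.1) hx0pi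
      rw [Fop]
      rw [show (rhoV M V z) = B from rfl, hinf, hsup, Finset.Icc_self]
  refine ⟨hkey, ?_⟩
  intro i
  obtain ⟨v, hv, hsing⟩ := hkey i
  rw [modFun, hsing]
  simpa using hv

end DRN
end

section
/- Let f be a network, M a symbolic steady state of f, and Z a component of G^θ(M) with vertex set V^Z. Then the global interaction graph G(f^Z) of the network module f^Z, with its vertices 1,…,k renamed via the order-preserving bijection ι : {1,…,k} → V^Z, is equal to Z (same vertex set and same set of signed edges). -/
/-! Discrete regulatory networks (Siebert), shared definitions. -/

open Finset

namespace DRN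

section Aux

variable {n : ℕ} {p : Fin n → ℕ}

lemma rho_subset_M {M : SymState p} {V : Set (Fin n)} {z : MState p V}
    (hz : memBoxV M V z) {x : NState p} (hx : memBox x (rhoV M V z)) :
    memBox x M := by
  intro l
  have hxl := hx l
  simp only [rhoV] at hxl
  split_ifs at hxl with h
  · simp only [Finset.mem_singleton] at hxl
    rw [hxl]; exact hz ⟨l, h⟩
  · exact hxl

lemma exists_mem_rho {M : SymState p} (hMb : IsBox M) (V : Set (Fin n)) (z : MState p V) :
    ∃ x : NState p, memBox x (rhoV M V z) := by
  have hne : ∀ l, ∃ v, v ∈ rhoV M V z l := by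
    intro l
    simp only [rhoV]
    split_ifs with h
    · exact ⟨_, Finset.mem_singleton_self _⟩
    · obtain ⟨a, b, hab, hMl⟩ := hMb l
      exact ⟨a, by rw [hMl]; exact Finset.mem_Icc.mpr ⟨le_refl a, hab⟩⟩
  exact ⟨fun l => (hne l).choose, fun l => (hne l).choose_spec⟩

lemma const_on_rho (f : NState p → NState p) (M : SymState p) (hMb : IsBox M)
    {V : Set (Fin n)} (hV : IsComponent f M V) {j : Fin n} (hj : j ∈ V)
    {z : MState p V} (hz : memBoxV M V z) :
    ∀ x y : NState p, memBox x (rhoV M V z) → memBox y (rhoV M V z) → f x j = f y j := by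
  obtain ⟨i0, hi0, hVeq⟩ := hV
  have hjV := hj
  rw [hVeq] at hjV
  obtain ⟨hjJ, hjconn⟩ := hjV
  have hmax : ∀ l, ThetaAdj f M l j → l ∈ V := by
    intro l hadj
    rw [hVeq]
    obtain ⟨ε', hε', hlJ, -, -⟩ := id hadj
    exact ⟨hlJ, Relation.ReflTransGen.tail hjconn (Or.inr hadj)⟩
  -- unit-step invariance
  have step : ∀ x x' : NState p, memBox x (rhoV M V z) → memBox x' (rhoV M V z) →
      ∀ l : Fin n, (∀ l', l' ≠ l → x' l' = x l') →
      (((x' l : ℕ) = (x l : ℕ) + 1) ∨ ((x l : ℕ) = (x' l : ℕ) + 1)) →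
      f x' j = f x j := by
    intro x x' hx hx' l hll hstep
    by_contra hne
    have hxl := hx l
    have hx'l := hx' l
    simp only [rhoV] at hxl hx'l
    by_cases h : l ∈ V
    · rw [dif_pos h] at hxl hx'l
      simp only [Finset.mem_singleton] at hxl hx'l
      rw [hxl, hx'l] at hstep
      omega
    · rw [dif_neg h] at hxl hx'l
      have hlJ : l ∈ JSet M := by
        have hxx : x l ≠ x' l := by
          intro hE; rw [hE] at hstep; omega
        exact Finset.one_lt_card.mpr ⟨x l, hxl, x' l, hx'l, hxx⟩
      have hmemx : memBox x M := rho_subset_M hz hx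
      have hmemx' : memBox x' M := rho_subset_M hz hx'
      have hdne : (((f x' j : ℕ) : ℤ) - ((f x j : ℕ) : ℤ)) ≠ 0 := by
        intro hE
        apply hne
        exact Fin.ext (by omega)
      have hsgn : Int.sign (((f x' j : ℕ) : ℤ) - ((f x j : ℕ) : ℤ)) = 1 ∨
          Int.sign (((f x' j : ℕ) : ℤ) - ((f x j : ℕ) : ℤ)) = -1 := by
        rcases hdne.lt_or_gt with hlt | hlt
        · exact Or.inr (Int.sign_eq_neg_one_iff_neg.mpr hlt)
        · exact Or.inl (Int.sign_eq_one_iff_pos.mpr hlt)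
      rcases hstep with hup | hdown
      · -- c = 1
        have hedge : GEdgeRestr f M l j
            (Int.sign (((f x' j : ℕ) : ℤ) - ((f x j : ℕ) : ℤ)) * 1) :=
          ⟨x, x', hmemx, hmemx', 1, Or.inl rfl, hll, by omega, rfl⟩
        have hadj : ThetaAdj f M l j :=
          ⟨_, by rcases hsgn with h1 | h1 <;> rw [h1] <;> simp, hlJ, hjJ, hedge⟩
        exact h (hmax l hadj)
      · -- c = -1
        have hedge : GEdgeRestr f M l j
            (Int.sign (((f x' j : ℕ) : ℤ) - ((f x j : ℕ) : ℤ)) * (-1)) :=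
          ⟨x, x', hmemx, hmemx', -1, Or.inr rfl, hll, by omega, rfl⟩
        have hadj : ThetaAdj f M l j :=
          ⟨_, by rcases hsgn with h1 | h1 <;> rw [h1] <;> simp, hlJ, hjJ, hedge⟩
        exact h (hmax l hadj)
  -- move one coordinate arbitrarily within the box
  have move : ∀ d : ℕ, ∀ x : NState p, memBox x (rhoV M V z) →
      ∀ (l : Fin n) (v : Fin (p l + 1)), v ∈ rhoV M V z l →
      ((v : ℕ) - (x l : ℕ)) + ((x l : ℕ) - (v : ℕ)) = d →
      f (Function.update x l v) j = f x j := by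
    intro d
    induction d with
    | zero =>
      intro x hx l v hv hd
      have hvx : v = x l := Fin.ext (by omega)
      rw [hvx, Function.update_eq_self]
    | succ d ih =>
      intro x hx l v hv hd
      have hv0 := hv
      have hxl := hx l
      by_cases h : l ∈ V
      · simp only [rhoV, dif_pos h, Finset.mem_singleton] at hv hxl
        rw [hv, hxl] at hd
        omega
      · simp only [rhoV, dif_neg h] at hv hxl
        obtain ⟨a, b, hab, hMl⟩ := hMb l
        rw [hMl, Finset.mem_Icc] at hv hxl
        have hva : (a : ℕ) ≤ (v : ℕ) := Fin.le_def.mp hv.1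
        have hvb : (v : ℕ) ≤ (b : ℕ) := Fin.le_def.mp hv.2
        have hxa : (a : ℕ) ≤ (x l : ℕ) := Fin.le_def.mp hxl.1
        have hxb : (x l : ℕ) ≤ (b : ℕ) := Fin.le_def.mp hxl.2
        rcases Nat.lt_trichotomy (x l : ℕ) (v : ℕ) with hlt | heq | hgt
        · -- step up: v' = v - 1
          set v' : Fin (p l + 1) := ⟨(v : ℕ) - 1, by omega⟩ with hv'def
          have hv'mem : v' ∈ rhoV M V z l := by
            simp only [rhoV, dif_neg h, hMl, Finset.mem_Icc]
            exact ⟨Fin.le_def.mpr (by simp [hv'def]; omega),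
                   Fin.le_def.mpr (by simp [hv'def]; omega)⟩
          have hupd' : memBox (Function.update x l v') (rhoV M V z) := by
            intro l'
            by_cases hl' : l' = l
            · subst hl'; rw [Function.update_self]; exact hv'mem
            · rw [Function.update_of_ne hl']; exact hx l'
          have hupd : memBox (Function.update x l v) (rhoV M V z) := by
            intro l'
            by_cases hl' : l' = l
            · subst hl'; rw [Function.update_self]; exact hv0
            · rw [Function.update_of_ne hl']; exact hx l'
          have h1 : f (Function.update x l v') j = f x j := by
            apply ih x hx l v' hv'mem
            simp only [hv'def]
            omega
          have h2 : f (Function.update x l v) j = f (Function.update x l v') j := by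
            apply step _ _ hupd' hupd l
            · intro l' hl'
              rw [Function.update_of_ne hl', Function.update_of_ne hl']
            · left
              rw [Function.update_self, Function.update_self]
              simp only [hv'def]
              omega
          rw [h2, h1]
        · exfalso; omega
        · -- step down: v' = v + 1
          set v' : Fin (p l + 1) := ⟨(v : ℕ) + 1, by omega⟩ with hv'def
          have hv'mem : v' ∈ rhoV M V z l := by
            simp only [rhoV, dif_neg h, hMl, Finset.mem_Icc]
            exact ⟨Fin.le_def.mpr (by simp [hv'def]; omega),
                   Fin.le_def.mpr (by simp [hv'def]; omega)⟩
          have hupd' : memBox (Function.update x l v') (rhoV M V z) := by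
            intro l'
            by_cases hl' : l' = l
            · subst hl'; rw [Function.update_self]; exact hv'mem
            · rw [Function.update_of_ne hl']; exact hx l'
          have hupd : memBox (Function.update x l v) (rhoV M V z) := by
            intro l'
            by_cases hl' : l' = l
            · subst hl'; rw [Function.update_self]; exact hv0
            · rw [Function.update_of_ne hl']; exact hx l'
          have h1 : f (Function.update x l v') j = f x j := by
            apply ih x hx l v' hv'mem
            simp only [hv'def]
            omega
          have h2 : f (Function.update x l v') j = f (Function.update x l v) j := by
            apply step _ _ hupd hupd' l
            · intro l' hl'
              rw [Function.update_of_ne hl', Function.update_of_ne hl']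
            · left
              rw [Function.update_self, Function.update_self]
          rw [← h2, h1]
  -- full constancy by induction on differing coordinates
  have key : ∀ s : Finset (Fin n), ∀ x y : NState p, memBox x (rhoV M V z) →
      memBox y (rhoV M V z) → (∀ l, l ∉ s → x l = y l) → f x j = f y j := by
    intro s
    induction s using Finset.induction_on with
    | empty =>
      intro x y _ _ hxy
      have hxyE : x = y := funext fun l => hxy l (Finset.notMem_empty l)
      rw [hxyE]
    | @insert l s hl ih =>
      intro x y hx hy hxy
      have hyl : y l ∈ rhoV M V z l := hy l
      have hx' : memBox (Function.update x l (y l)) (rhoV M V z) := by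
        intro l'
        by_cases h : l' = l
        · subst h; rw [Function.update_self]; exact hyl
        · rw [Function.update_of_ne h]; exact hx l'
      have h1 : f (Function.update x l (y l)) j = f x j :=
        move _ x hx l (y l) hyl rfl
      have h2 : f (Function.update x l (y l)) j = f y j := by
        apply ih _ _ hx' hy
        intro l' hl'
        by_cases h : l' = l
        · subst h; rw [Function.update_self]
        · rw [Function.update_of_ne h]
          exact hxy l' (by simp [h, hl'])
      rw [← h1, h2]
  intro x y hx hy
  exact key Finset.univ x y hx hy (fun l hl => absurd (Finset.mem_univ l) hl)

lemma modFun_eq_of_const {f : NState p → NState p} {M : SymState p}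
    {V : Set (Fin n)} {z : MState p V} {j : V}
    (hconst : ∀ x y : NState p, memBox x (rhoV M V z) → memBox y (rhoV M V z) →
      f x j.1 = f y j.1)
    {x : NState p} (hx : memBox x (rhoV M V z)) :
    modFun f M V z j = f x j.1 := by
  have hxmem : x ∈ Fintype.piFinset (rhoV M V z) := Fintype.mem_piFinset.mpr hx
  have hinf : (Fintype.piFinset (rhoV M V z)).inf (fun y => f y j.1) = f x j.1 := by
    apply le_antisymm
    · exact Finset.inf_le (f := fun y => f y j.1) hxmem
    · exact Finset.le_inf fun y hy => le_of_eq (hconst x y hx (Fintype.mem_piFinset.mp hy))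
  have hsup : (Fintype.piFinset (rhoV M V z)).sup (fun y => f y j.1) = f x j.1 := by
    apply le_antisymm
    · exact Finset.sup_le fun y hy => le_of_eq (hconst y x (Fintype.mem_piFinset.mp hy) hx)
    · exact Finset.le_sup (f := fun y => f y j.1) hxmem
  have hFop : Fop f (rhoV M V z) j.1 = {f x j.1} := by
    simp only [Fop]
    rw [hinf, hsup, Finset.Icc_self]
  simp only [modFun, hFop, Finset.inf_singleton, id_eq]

end Aux

/-- for a component `Z` of `G^θ(M)` with vertex set `V`, the global
interaction graph `G(f^Z)` (vertices renamed into `V`) equals `Z`: it has the same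
vertex set `V` and exactly the signed edges of `G^θ(M)` between vertices of `V`. -/
theorem stmt11 {n : ℕ} {p : Fin n → ℕ} (f : NState p → NState p) (M : SymState p)
    (hM : IsSymSteady f M) (V : Set (Fin n)) (hV : IsComponent f M V) :
    ∀ (i j : V) (ε : ℤ), ε = 1 ∨ ε = -1 →
      ((∃ z z' : MState p V, memBoxV M V z ∧ memBoxV M V z' ∧ ∃ c : ℤ,
          (c = 1 ∨ c = -1) ∧ (∀ l : V, l ≠ i → z' l = z l) ∧
          ((z' i : ℕ) : ℤ) = ((z i : ℕ) : ℤ) + c ∧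
          Int.sign (((modFun f M V z' j : ℕ) : ℤ) - ((modFun f M V z j : ℕ) : ℤ)) * c = ε)
        ↔ ThetaEdge f M i.1 j.1 ε) := by
  obtain ⟨hMbox, -, -⟩ := hM
  intro i j ε hε
  obtain ⟨i0, hi0, hVeq⟩ := hV
  have hVcomp : IsComponent f M V := ⟨i0, hi0, hVeq⟩
  have hiJ : i.1 ∈ JSet M := by
    have h2 : (i : Fin n) ∈ {j | j ∈ JSet M ∧ ThetaConn f M i0 j} := by
      rw [← hVeq]; exact i.2
    exact h2.1
  have hjJ : j.1 ∈ JSet M := by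
    have h2 : (j : Fin n) ∈ {j' | j' ∈ JSet M ∧ ThetaConn f M i0 j'} := by
      rw [← hVeq]; exact j.2
    exact h2.1
  constructor
  · rintro ⟨z, z', hz, hz', c, hc, hll, hic, hsig⟩
    refine ⟨hiJ, hjJ, ?_⟩
    obtain ⟨x, hx⟩ := exists_mem_rho hMbox V z
    set x' := Function.update x i.1 (z' i) with hx'def
    have hzi : x i.1 = z i := by
      have hxi := hx i.1
      simp only [rhoV] at hxi
      rw [dif_pos i.2, Finset.mem_singleton] at hxi
      exact hxi
    have hx' : memBox x' (rhoV M V z') := by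
      intro l
      by_cases h : l = i.1
      · subst h
        rw [hx'def, Function.update_self]
        simp only [rhoV]
        rw [dif_pos i.2, Finset.mem_singleton]
      · rw [hx'def, Function.update_of_ne h]
        have hxl := hx l
        simp only [rhoV] at hxl ⊢
        by_cases hlv : l ∈ V
        · rw [dif_pos hlv] at hxl ⊢
          rw [Finset.mem_singleton] at hxl ⊢
          rw [hxl, ← hll ⟨l, hlv⟩ (fun hE => h (congrArg Subtype.val hE))]
        · rw [dif_neg hlv] at hxl ⊢
          exact hxl
    have hconst := const_on_rho f M hMbox hVcomp j.2 hz
    have hconst' := const_on_rho f M hMbox hVcomp j.2 hz'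
    have hm1 : modFun f M V z j = f x j.1 := modFun_eq_of_const hconst hx
    have hm2 : modFun f M V z' j = f x' j.1 := modFun_eq_of_const hconst' hx'
    rw [hm1, hm2] at hsig
    refine ⟨x, x', rho_subset_M hz hx, rho_subset_M hz' hx', c, hc, ?_, ?_, hsig⟩
    · intro l hl
      rw [hx'def, Function.update_of_ne hl]
    · rw [hx'def, Function.update_self, hzi]
      exact hic
  · rintro ⟨-, -, x, x', hxM, hx'M, c, hc, hll, hic, hsig⟩
    have hzbox : memBoxV M V (projV V x) := fun l => hxM l.1
    have hz'box : memBoxV M V (projV V x') := fun l => hx'M l.1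
    have hx_rho : memBox x (rhoV M V (projV V x)) := by
      intro l
      simp only [rhoV]
      split_ifs with h
      · rw [Finset.mem_singleton]; rfl
      · exact hxM l
    have hx'_rho : memBox x' (rhoV M V (projV V x')) := by
      intro l
      simp only [rhoV]
      split_ifs with h
      · rw [Finset.mem_singleton]; rfl
      · exact hx'M l
    have hconst := const_on_rho f M hMbox hVcomp j.2 hzbox
    have hconst' := const_on_rho f M hMbox hVcomp j.2 hz'box
    refine ⟨projV V x, projV V x', hzbox, hz'box, c, hc, ?_, hic, ?_⟩
    · intro l hl
      exact hll l.1 (fun hE => hl (Subtype.ext hE))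
    · rw [modFun_eq_of_const hconst hx_rho, modFun_eq_of_const hconst' hx'_rho]
      exact hsig

end DRN
end

section
/- Let f be a network, M a symbolic steady state of f, and Z_1,…,Z_m the components of G^θ(M). A state x ∈ M is a fixed point of f if and only if π^{Z_j}(x) is a fixed point of f^{Z_j} for all j ∈ {1,…,m}. -/
/-! Discrete regulatory networks (Siebert), shared definitions. -/

open Finset

namespace DRN

section Aux

variable {n : ℕ} {p : Fin n → ℕ}

lemma f_mem (f : NState p → NState p) (M : SymState p)
    (hF : Fop f M = M) {x : NState p} (hx : memBox x M) (i : Fin n) :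
    f x i ∈ M i := by
  have hx' : x ∈ Fintype.piFinset M := Fintype.mem_piFinset.mpr hx
  have h1 : (Fintype.piFinset M).inf (fun y => f y i) ≤ f x i :=
    Finset.inf_le hx'
  have h2 : f x i ≤ (Fintype.piFinset M).sup (fun y => f y i) :=
    Finset.le_sup (f := fun y => f y i) hx'
  have hm : f x i ∈ Fop f M i := Finset.mem_Icc.mpr ⟨h1, h2⟩
  rwa [hF] at hm

lemma fix_of_singleton (f : NState p → NState p) (M : SymState p)
    (hF : Fop f M = M) {x : NState p} (hx : memBox x M) {i : Fin n}
    (hcard : (M i).card = 1) : f x i = x i := by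
  obtain ⟨a, ha⟩ := Finset.card_eq_one.mp hcard
  have h1 := f_mem f M hF hx i
  have h2 := hx i
  rw [ha, Finset.mem_singleton] at h1 h2
  rw [h1, h2]

lemma step_const (f : NState p → NState p) (M : SymState p) {l i : Fin n}
    (hadj : ¬ ThetaAdj f M l i) (hi : i ∈ JSet M)
    {x y : NState p} (hx : memBox x M) (hy : memBox y M)
    (hagree : ∀ k, k ≠ l → y k = x k)
    (hstep : ((y l : ℕ) : ℤ) = ((x l : ℕ) : ℤ) + 1) :
    f x i = f y i := by
  by_contra h
  have hval : ((f y i : ℕ) : ℤ) - ((f x i : ℕ) : ℤ) ≠ 0 := by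
    intro h0
    exact h (Fin.ext (by omega)).symm
  have hlJ : l ∈ JSet M := by
    have hne : x l ≠ y l := by
      intro he; rw [he] at hstep; omega
    exact Finset.one_lt_card.mpr ⟨x l, hx l, y l, hy l, hne⟩
  apply hadj
  refine ⟨Int.sign (((f y i : ℕ) : ℤ) - ((f x i : ℕ) : ℤ)), ?_, hlJ, hi,
    x, y, hx, hy, 1, Or.inl rfl, hagree, hstep, mul_one _⟩
  rcases lt_trichotomy (((f y i : ℕ) : ℤ) - ((f x i : ℕ) : ℤ)) 0 with h1 | h1 | h1
  · exact Or.inr (Int.sign_eq_neg_one_of_neg h1)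
  · exact absurd h1 hval
  · exact Or.inl (Int.sign_eq_one_of_pos h1)

lemma constancy (f : NState p → NState p) (M : SymState p) (hbox : IsBox M)
    {i : Fin n} (hi : i ∈ JSet M) :
    ∀ d : ℕ, ∀ x y : NState p, memBox x M → memBox y M →
      (∀ l, x l ≠ y l → ¬ ThetaAdj f M l i) →
      (∑ l, Nat.dist (x l : ℕ) (y l : ℕ)) ≤ d → f x i = f y i := by
  intro d
  induction d with
  | zero =>
    intro x y hx hy _ hsum
    have hxy : x = y := by
      funext l
      have h0 : Nat.dist (x l : ℕ) (y l : ℕ) = 0 := by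
        have := Nat.le_zero.mp hsum
        exact Finset.sum_eq_zero_iff.mp this l (Finset.mem_univ l)
      exact Fin.ext (Nat.eq_of_dist_eq_zero h0)
    rw [hxy]
  | succ d ih =>
    intro x y hx hy hadj hsum
    by_cases hxy : ∀ l, x l = y l
    · rw [funext hxy]
    push_neg at hxy
    obtain ⟨l, hl⟩ := hxy
    have hlv : (x l : ℕ) ≠ (y l : ℕ) := fun h => hl (Fin.ext h)
    obtain ⟨a, b, hab, hMl⟩ := hbox l
    have hxl := hx l
    have hyl := hy l
    rw [hMl, Finset.mem_Icc] at hxl hyl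
    have hxa : (a : ℕ) ≤ (x l : ℕ) := hxl.1
    have hxb : (x l : ℕ) ≤ (b : ℕ) := hxl.2
    have hya : (a : ℕ) ≤ (y l : ℕ) := hyl.1
    have hyb : (y l : ℕ) ≤ (b : ℕ) := hyl.2
    rcases Nat.lt_or_ge (x l : ℕ) (y l : ℕ) with hlt | hge
    · -- step up
      have hvlt : (x l : ℕ) + 1 < p l + 1 := lt_of_le_of_lt hlt (y l).isLt
      set v : Fin (p l + 1) := ⟨(x l : ℕ) + 1, hvlt⟩ with hvdef
      set x' := Function.update x l v with hx'def
      have hx'l : x' l = v := Function.update_self l v x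
      have hx'k : ∀ k, k ≠ l → x' k = x k := fun k hk =>
        Function.update_of_ne hk v x
      have hx'M : memBox x' M := by
        intro k
        by_cases hk : k = l
        · subst hk
          rw [hx'l, hMl, Finset.mem_Icc]
          constructor
          · exact le_trans hxl.1 (Fin.le_def.mpr (by simp [hvdef]))
          · exact Fin.le_def.mpr (by simp [hvdef]; omega)
        · rw [hx'k k hk]; exact hx k
      have h1 : f x i = f x' i :=
        step_const f M (hadj l hl) hi hx hx'M (fun k hk => hx'k k hk)
          (by rw [hx'l]; simp [hvdef])
      have hadj' : ∀ k, x' k ≠ y k → ¬ ThetaAdj f M k i := by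
        intro k hk
        by_cases hkl : k = l
        · subst hkl; exact hadj k hl
        · rw [hx'k k hkl] at hk; exact hadj k hk
      have hsum' : (∑ k, Nat.dist (x' k : ℕ) (y k : ℕ)) ≤ d := by
        have hs : (∑ k, Nat.dist (x' k : ℕ) (y k : ℕ)) + 1
            = ∑ k, Nat.dist (x k : ℕ) (y k : ℕ) := by
          rw [← Finset.sum_erase_add _ _ (Finset.mem_univ l),
              ← Finset.sum_erase_add _ _ (Finset.mem_univ l)]
          have he : (∑ k ∈ Finset.univ.erase l, Nat.dist (x' k : ℕ) (y k : ℕ))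
              = ∑ k ∈ Finset.univ.erase l, Nat.dist (x k : ℕ) (y k : ℕ) :=
            Finset.sum_congr rfl fun k hk => by
              rw [hx'k k (Finset.ne_of_mem_erase hk)]
          have hd : Nat.dist (x' l : ℕ) (y l : ℕ) + 1
              = Nat.dist (x l : ℕ) (y l : ℕ) := by
            rw [hx'l]; simp [hvdef, Nat.dist]; omega
          omega
        omega
      exact h1.trans (ih x' y hx'M hy hadj' hsum')
    · -- step down
      have hgt : (y l : ℕ) < (x l : ℕ) := lt_of_le_of_ne hge (Ne.symm hlv)
      set v : Fin (p l + 1) := ⟨(x l : ℕ) - 1, by omega⟩ with hvdef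
      set x' := Function.update x l v with hx'def
      have hx'l : x' l = v := Function.update_self l v x
      have hx'k : ∀ k, k ≠ l → x' k = x k := fun k hk =>
        Function.update_of_ne hk v x
      have hx'M : memBox x' M := by
        intro k
        by_cases hk : k = l
        · subst hk
          rw [hx'l, hMl, Finset.mem_Icc]
          constructor
          · exact Fin.le_def.mpr (by simp [hvdef]; omega)
          · exact Fin.le_def.mpr (by simp [hvdef]; omega)
        · rw [hx'k k hk]; exact hx k
      have h1 : f x' i = f x i :=
        step_const f M (hadj l hl) hi hx'M hx (fun k hk => (hx'k k hk).symm)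
          (by rw [hx'l]; simp [hvdef]; omega)
      have hadj' : ∀ k, x' k ≠ y k → ¬ ThetaAdj f M k i := by
        intro k hk
        by_cases hkl : k = l
        · subst hkl; exact hadj k hl
        · rw [hx'k k hkl] at hk; exact hadj k hk
      have hsum' : (∑ k, Nat.dist (x' k : ℕ) (y k : ℕ)) ≤ d := by
        have hs : (∑ k, Nat.dist (x' k : ℕ) (y k : ℕ)) + 1
            = ∑ k, Nat.dist (x k : ℕ) (y k : ℕ) := by
          rw [← Finset.sum_erase_add _ _ (Finset.mem_univ l),
              ← Finset.sum_erase_add _ _ (Finset.mem_univ l)]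
          have he : (∑ k ∈ Finset.univ.erase l, Nat.dist (x' k : ℕ) (y k : ℕ))
              = ∑ k ∈ Finset.univ.erase l, Nat.dist (x k : ℕ) (y k : ℕ) :=
            Finset.sum_congr rfl fun k hk => by
              rw [hx'k k (Finset.ne_of_mem_erase hk)]
          have hd : Nat.dist (x' l : ℕ) (y l : ℕ) + 1
              = Nat.dist (x l : ℕ) (y l : ℕ) := by
            rw [hx'l]; simp [hvdef, Nat.dist]; omega
          omega
        omega
      exact h1.symm.trans (ih x' y hx'M hy hadj' hsum')

lemma modFun_eq (f : NState p → NState p) (M : SymState p) (hbox : IsBox M)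
    {i0 : Fin n} (hi0 : i0 ∈ JSet M)
    (V : Set (Fin n)) (hV : V = {j | j ∈ JSet M ∧ ThetaConn f M i0 j})
    {x : NState p} (hx : memBox x M) (i : Fin n) (hiV : i ∈ V) :
    modFun f M V (projV V x) ⟨i, hiV⟩ = f x i := by
  have hiJ : i ∈ JSet M := by rw [hV] at hiV; exact hiV.1
  have hiconn : ThetaConn f M i0 i := by rw [hV] at hiV; exact hiV.2
  set N := rhoV M V (projV V x) with hN
  have hNsub : ∀ y ∈ Fintype.piFinset N, memBox y M ∧ ∀ l ∈ V, y l = x l := by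
    intro y hy
    rw [Fintype.mem_piFinset] at hy
    constructor
    · intro l
      have := hy l
      by_cases hl : l ∈ V
      · rw [hN] at this
        simp only [rhoV, dif_pos hl, Finset.mem_singleton] at this
        rw [this]; exact hx l
      · rw [hN] at this
        simp only [rhoV, dif_neg hl] at this
        exact this
    · intro l hl
      have := hy l
      rw [hN] at this
      simp only [rhoV, dif_pos hl, Finset.mem_singleton] at this
      exact this
  have hne : (Fintype.piFinset N).Nonempty := by
    rw [Fintype.piFinset_nonempty]
    intro l
    by_cases hl : l ∈ V
    · rw [hN]; simp only [rhoV, dif_pos hl]; exact Finset.singleton_nonempty _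
    · rw [hN]; simp only [rhoV, dif_neg hl]
      obtain ⟨a, b, hab, hMl⟩ := hbox l
      rw [hMl]; exact Finset.nonempty_Icc.mpr hab
  have hconst : ∀ y ∈ Fintype.piFinset N, f y i = f x i := by
    intro y hy
    obtain ⟨hyM, hyV⟩ := hNsub y hy
    refine constancy f M hbox hiJ (∑ l, Nat.dist (y l : ℕ) (x l : ℕ)) y x hyM hx
      ?_ le_rfl
    intro l hl hTA
    have hlV : l ∉ V := fun h => hl (hyV l h)
    apply hlV
    obtain ⟨ε, hε, hlJ, _, hedge⟩ := hTA
    rw [hV]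
    exact ⟨hlJ, hiconn.tail (Or.inr ⟨ε, hε, hlJ, hiJ, hedge⟩)⟩
  have hinf : (Fintype.piFinset N).inf (fun y => f y i) = f x i := by
    rw [Finset.inf_congr rfl hconst]
    exact Finset.inf_const hne _
  have hsup : (Fintype.piFinset N).sup (fun y => f y i) = f x i := by
    rw [Finset.sup_congr rfl hconst]
    exact Finset.sup_const hne _
  show (Fop f N i).inf id = f x i
  unfold Fop
  rw [hinf, hsup, Finset.Icc_self, Finset.inf_singleton]
  rfl

end Aux

/-- with `V 0, …, V (m-1)` the components of `G^θ(M)`, a state `x ∈ M`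
is a fixed point of `f` iff `π^{Z_j}(x)` is a fixed point of `f^{Z_j}` for all `j`. -/
theorem stmt13 {n : ℕ} {p : Fin n → ℕ} (f : NState p → NState p) (M : SymState p)
    (hM : IsSymSteady f M) (m : ℕ) (V : Fin m → Set (Fin n))
    (hVinj : Function.Injective V)
    (hcomp : ∀ W : Set (Fin n), IsComponent f M W ↔ ∃ j, V j = W)
    (x : NState p) (hx : memBox x M) :
    f x = x ↔ ∀ j, modFun f M (V j) (projV (V j) x) = projV (V j) x := by
  obtain ⟨hbox, hnreg, hF⟩ := hM
  constructor
  · intro hfx j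
    have hVj : IsComponent f M (V j) := (hcomp (V j)).mpr ⟨j, rfl⟩
    obtain ⟨i0, hi0, hVeq⟩ := hVj
    funext i
    obtain ⟨i, hiV⟩ := i
    have h1 : modFun f M (V j) (projV (V j) x) ⟨i, hiV⟩ = f x i :=
      modFun_eq f M hbox hi0 (V j) hVeq hx i hiV
    rw [h1, hfx]
    rfl
  · intro h
    funext i
    by_cases hiJ : i ∈ JSet M
    · have hW : IsComponent f M {j | j ∈ JSet M ∧ ThetaConn f M i j} :=
        ⟨i, hiJ, rfl⟩
      obtain ⟨j, hj⟩ := (hcomp _).mp hW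
      have hiW : i ∈ V j := by rw [hj]; exact ⟨hiJ, Relation.ReflTransGen.refl⟩
      have h1 : modFun f M (V j) (projV (V j) x) ⟨i, hiW⟩ = f x i :=
        modFun_eq f M hbox hiJ (V j) hj hx i hiW
      have h2 := congrFun (h j) ⟨i, hiW⟩
      rw [h1] at h2
      exact h2
    · have hcard : (M i).card = 1 := by
        have h1 : (M i).card ≤ 1 := by
          simpa [JSet] using hiJ
        have h2 : 1 ≤ (M i).card := Finset.card_pos.mpr ⟨x i, hx i⟩
        omega
      exact fix_of_singleton f M hF hx hcard

end DRN
end
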